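/- arXiv:1705.06568 — 9 statements merged into one kernel-verified Lean document; each statement's English description precedes it below -/
import Mathlib

section
/- Suppose ω ∈ ℝ^n and k ∈ ℝ_{>0}^n satisfy IC1, IC2, and IC3, and let σ ∈ {−1,+1}^n. If the partial sums s_ℓ = Σ_{μ=1}^ℓ σ_μ k_μ satisfy s_ℓ ≤ 0 for every ℓ = 1, 2, …, n, then f_σ has no positive roots. -/
/-- The function `f_σ(R) = -R + (1/n) ∑ μ, σ μ √(k μ² R - ω μ²)`. -/
noncomputable def fSigma (n : ℕ) (ω k σ : Fin n → ℝ) (R : ℝ) : ℝ :=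
  -R + (1 / (n : ℝ)) * ∑ μ, σ μ * Real.sqrt ((k μ) ^ 2 * R - (ω μ) ^ 2)

/-- `R` is a positive root of `f_σ`. -/
def IsPosRoot (n : ℕ) (ω k σ : Fin n → ℝ) (R : ℝ) : Prop :=
  0 < R ∧ (∀ μ, (ω μ) ^ 2 ≤ (k μ) ^ 2 * R) ∧ fSigma n ω k σ R = 0

/-!
Writing `√(k_μ² R - ω_μ²) = k_μ √(R - (ω_μ/k_μ)²)`, the sum in `f_σ(R)` becomes
`∑ μ, (σ_μ k_μ) t_μ` with weights `t_μ = √(R - (ω_μ/k_μ)²)` that are nonnegative and, by the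
ordering IC3, nonincreasing in `μ`. Abel summation rewrites such a sum as a nonnegative
combination of the partial sums `s_ℓ`, so it is `≤ 0`; hence `f_σ(R) ≤ -R < 0` for `R > 0`.
-/

open Finset

theorem Fin.sum_mul_nonpos_of_antitone {R : Type*} [Ring R] [PartialOrder R] [IsOrderedRing R] :
    ∀ {n : ℕ} {a t : Fin n → R}, Antitone t → (∀ μ, 0 ≤ t μ) →
      (∀ ℓ, ∑ μ ∈ Iic ℓ, a μ ≤ 0) → ∑ μ, a μ * t μ ≤ 0
  | 0, _, _, _, _, _ => by simp
  | n + 1, a, t, ht, ht0, ha => by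
    -- Split off `t (last n)`; what remains has a vanishing last weight, so lives on `Fin n`.
    have hrest : ∑ μ : Fin n, a μ.castSucc * (t μ.castSucc - t (last n)) ≤ 0 :=
      Fin.sum_mul_nonpos_of_antitone (fun i j hij => sub_le_sub_right (ht (by simpa)) _)
        (fun μ => sub_nonneg.2 (ht (le_last _)))
        (fun ℓ => by simpa only [Fin.sum_Iic_castSucc] using ha ℓ.castSucc)
    have hlast : (∑ μ, a μ) * t (last n) ≤ 0 :=
      mul_nonpos_of_nonpos_of_nonneg (by simpa [← Fin.top_eq_last] using ha (last n)) (ht0 _)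
    calc ∑ μ, a μ * t μ
        = ∑ μ : Fin n, a μ.castSucc * (t μ.castSucc - t (last n)) + (∑ μ, a μ) * t (last n) := by
          rw [Finset.sum_mul]
          simp only [Fin.sum_univ_castSucc, mul_sub, Finset.sum_sub_distrib]
          abel
      _ ≤ 0 := add_nonpos hrest hlast

theorem Real.sqrt_sq_mul_sub_sq {k : ℝ} (hk : 0 < k) (R ω : ℝ) :
    √(k ^ 2 * R - ω ^ 2) = k * √(R - (ω / k) ^ 2) := by
  rw [show k ^ 2 * R - ω ^ 2 = k ^ 2 * (R - (ω / k) ^ 2) by field_simp,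
    Real.sqrt_mul (sq_nonneg k), Real.sqrt_sq hk.le]

theorem antitone_sqrt_sub_sq {ι : Type*} [Preorder ι] {g : ι → ℝ} (hg : Monotone fun i => |g i|)
    (R : ℝ) : Antitone fun i => √(R - g i ^ 2) := fun i j hij => by
  refine Real.sqrt_le_sqrt (sub_le_sub_left ?_ R)
  simpa only [sq_abs] using pow_le_pow_left₀ (abs_nonneg _) (hg hij) 2

theorem no_posRoot_of_partial_sums_nonpos_general (n : ℕ) (ω k σ : Fin n → ℝ)
    (hIC3pos : ∀ μ, 0 < k μ)
    (hIC3ord : ∀ μ ν : Fin n, μ ≤ ν → |ω μ / k μ| ≤ |ω ν / k ν|)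
    (hpart : ∀ ℓ : Fin n, ∑ μ ∈ Finset.univ.filter (fun μ => μ ≤ ℓ), σ μ * k μ ≤ 0) :
    ¬ ∃ R : ℝ, IsPosRoot n ω k σ R := by
  rintro ⟨R, hR, -, hroot⟩
  have hsum : ∑ μ, σ μ * √(k μ ^ 2 * R - ω μ ^ 2) ≤ 0 := by
    simp only [Real.sqrt_sq_mul_sub_sq (hIC3pos _), ← mul_assoc]
    exact Fin.sum_mul_nonpos_of_antitone (antitone_sqrt_sub_sq (fun μ ν => hIC3ord μ ν) R)
      (fun _ => Real.sqrt_nonneg _) (fun ℓ => by simpa only [filter_ge_eq_Iic] using hpart ℓ)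
  have : 1 / (n : ℝ) * ∑ μ, σ μ * √(k μ ^ 2 * R - ω μ ^ 2) ≤ 0 :=
    mul_nonpos_of_nonneg_of_nonpos (by positivity) hsum
  rw [fSigma] at hroot
  linarith

/-- Prop. 2.2: under IC1–IC3, if all the partial sums
`s_ℓ = ∑_{μ=1}^ℓ σ μ k μ` are nonpositive then `f_σ` has no positive roots. -/
theorem no_posRoot_of_partial_sums_nonpos (n : ℕ) (hn : 2 ≤ n) (ω k σ : Fin n → ℝ)
    (hIC1 : ∑ μ, ω μ = 0) (hIC2 : ω ≠ 0)
    (hIC3pos : ∀ μ, 0 < k μ)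
    (hIC3ord : ∀ μ ν : Fin n, μ ≤ ν → |ω μ / k μ| ≤ |ω ν / k ν|)
    (hσ : ∀ μ, σ μ = -1 ∨ σ μ = 1)
    (hpart : ∀ ℓ : Fin n, ∑ μ ∈ Finset.univ.filter (fun μ => μ ≤ ℓ), σ μ * k μ ≤ 0) :
    ¬ ∃ R : ℝ, IsPosRoot n ω k σ R :=
  no_posRoot_of_partial_sums_nonpos_general n ω k σ hIC3pos hIC3ord hpart
end

section
/- Suppose ω ∈ ℝ^n and k ∈ ℝ_{>0}^n satisfy IC1, IC2, and IC3. Let σ ∈ {−1,+1}^n with σ_μ = +1 for some index μ, and let σ' ∈ {−1,+1}^n be defined by σ'_μ = −1 and σ'_ν = σ_ν for all ν ≠ μ. If f_σ has no positive roots, then f_{σ'} also has no positive roots. -/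
/-- Lemma 2.4: under IC1–IC3, if `σ μ = +1` and `σ'` is obtained from `σ`
by flipping the `μ`-th entry to `-1`, and `f_σ` has no positive roots, then `f_{σ'}`
has no positive roots either. -/
theorem no_posRoot_of_flip_to_minus (n : ℕ) (hn : 2 ≤ n) (ω k σ : Fin n → ℝ)
    (hIC1 : ∑ μ, ω μ = 0) (hIC2 : ω ≠ 0)
    (hIC3pos : ∀ μ, 0 < k μ)
    (hIC3ord : ∀ μ ν : Fin n, μ ≤ ν → |ω μ / k μ| ≤ |ω ν / k ν|)
    (hσ : ∀ μ, σ μ = -1 ∨ σ μ = 1)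
    (μ : Fin n) (hμ : σ μ = 1)
    (σ' : Fin n → ℝ) (hσ'μ : σ' μ = -1) (hσ'ν : ∀ ν, ν ≠ μ → σ' ν = σ ν)
    (hno : ¬ ∃ R : ℝ, IsPosRoot n ω k σ R) :
    ¬ ∃ R : ℝ, IsPosRoot n ω k σ' R := by
  rintro ⟨R, hRpos, hdom, hzero⟩
  apply hno
  have hn0 : (0:ℝ) < (n:ℝ) := by
    have : 0 < n := lt_of_lt_of_le (by norm_num) hn
    exact_mod_cast this
  -- f_σ(R) ≥ 0
  have hge : 0 ≤ fSigma n ω k σ R := by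
    have hdiff : fSigma n ω k σ R - fSigma n ω k σ' R
        = (1/(n:ℝ)) * (2 * Real.sqrt ((k μ)^2 * R - (ω μ)^2)) := by
      unfold fSigma
      have : (∑ ν, σ ν * Real.sqrt ((k ν)^2 * R - (ω ν)^2))
          - (∑ ν, σ' ν * Real.sqrt ((k ν)^2 * R - (ω ν)^2))
          = ∑ ν, (σ ν - σ' ν) * Real.sqrt ((k ν)^2 * R - (ω ν)^2) := by
        rw [← Finset.sum_sub_distrib]; congr 1; funext ν; ring
      have hsingle : ∑ ν, (σ ν - σ' ν) * Real.sqrt ((k ν)^2 * R - (ω ν)^2)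
          = 2 * Real.sqrt ((k μ)^2 * R - (ω μ)^2) := by
        rw [Finset.sum_eq_single μ]
        · rw [hμ, hσ'μ]; ring
        · intro ν _ hνμ; rw [hσ'ν ν hνμ]; ring
        · intro h; exact absurd (Finset.mem_univ μ) h
      rw [show ∀ a b c : ℝ, -R + a * b - (-R + a * c) = a * (b - c) from by intros; ring,
        this, hsingle]
    have hsq : 0 ≤ Real.sqrt ((k μ)^2 * R - (ω μ)^2) := Real.sqrt_nonneg _
    have : 0 ≤ fSigma n ω k σ R - fSigma n ω k σ' R := by
      rw [hdiff]; positivity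
    linarith [this, hzero ▸ this]
  -- continuity of f_σ
  have hc : Continuous (fSigma n ω k σ) := by
    unfold fSigma
    apply Continuous.add
    · exact continuous_neg
    · apply Continuous.mul continuous_const
      apply continuous_finset_sum
      intro ν _
      exact Continuous.mul continuous_const
        (Real.continuous_sqrt.comp (by continuity))
  -- a point where f_σ is negative
  set C : ℝ := (1/(n:ℝ)) * ∑ ν, k ν with hC
  have hCnonneg : 0 ≤ C := by
    apply mul_nonneg (by positivity)
    exact Finset.sum_nonneg fun ν _ => (hIC3pos ν).le
  set R₁ : ℝ := max R (C^2) + 1 with hR₁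
  have hRR₁ : R ≤ R₁ := le_trans (le_max_left _ _) (by linarith)
  have hR₁pos : 0 < R₁ := lt_of_lt_of_le hRpos hRR₁
  have hsqrtR₁ : C < Real.sqrt R₁ := by
    have h1 : C^2 < R₁ := lt_of_le_of_lt (le_max_right _ _) (by linarith)
    have := Real.sqrt_lt_sqrt (by positivity) h1
    rwa [Real.sqrt_sq hCnonneg] at this
  have hneg : fSigma n ω k σ R₁ < 0 := by
    have hbound : ∀ ν : Fin n, σ ν * Real.sqrt ((k ν)^2 * R₁ - (ω ν)^2)
        ≤ k ν * Real.sqrt R₁ := by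
      intro ν
      have h1 : σ ν * Real.sqrt ((k ν)^2 * R₁ - (ω ν)^2)
          ≤ Real.sqrt ((k ν)^2 * R₁ - (ω ν)^2) := by
        rcases hσ ν with h | h <;> rw [h] <;> nlinarith [Real.sqrt_nonneg ((k ν)^2 * R₁ - (ω ν)^2)]
      have h2 : Real.sqrt ((k ν)^2 * R₁ - (ω ν)^2) ≤ Real.sqrt ((k ν)^2 * R₁) := by
        apply Real.sqrt_le_sqrt; nlinarith [sq_nonneg (ω ν)]
      have h3 : Real.sqrt ((k ν)^2 * R₁) = k ν * Real.sqrt R₁ := by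
        rw [Real.sqrt_mul (by positivity), Real.sqrt_sq (hIC3pos ν).le]
      linarith
    have hsum : ∑ ν, σ ν * Real.sqrt ((k ν)^2 * R₁ - (ω ν)^2)
        ≤ (∑ ν, k ν) * Real.sqrt R₁ := by
      rw [Finset.sum_mul]
      exact Finset.sum_le_sum fun ν _ => hbound ν
    have hf : fSigma n ω k σ R₁ ≤ -R₁ + C * Real.sqrt R₁ := by
      unfold fSigma
      have : (1/(n:ℝ)) * ∑ ν, σ ν * Real.sqrt ((k ν)^2 * R₁ - (ω ν)^2)
          ≤ (1/(n:ℝ)) * ((∑ ν, k ν) * Real.sqrt R₁) := by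
        apply mul_le_mul_of_nonneg_left hsum (by positivity)
      calc -R₁ + (1/(n:ℝ)) * ∑ ν, σ ν * Real.sqrt ((k ν)^2 * R₁ - (ω ν)^2)
          ≤ -R₁ + (1/(n:ℝ)) * ((∑ ν, k ν) * Real.sqrt R₁) := by linarith
        _ = -R₁ + C * Real.sqrt R₁ := by rw [hC]; ring
    have hsq : Real.sqrt R₁ * Real.sqrt R₁ = R₁ := Real.mul_self_sqrt hR₁pos.le
    have hsp : 0 < Real.sqrt R₁ := Real.sqrt_pos.mpr hR₁pos
    nlinarith [hf]
  -- IVT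
  obtain ⟨R', hR'mem, hR'root⟩ :=
    intermediate_value_Icc' hRR₁ (hc.continuousOn) ⟨hneg.le, hge⟩
  refine ⟨R', lt_of_lt_of_le hRpos hR'mem.1, fun ν => ?_, hR'root⟩
  calc (ω ν)^2 ≤ (k ν)^2 * R := hdom ν
    _ ≤ (k ν)^2 * R' := by nlinarith [sq_nonneg (k ν), hR'mem.1]
end

section
/- Suppose ω ∈ ℝ^n and k ∈ ℝ_{>0}^n satisfy IC1, IC2, and IC3. Let σ ∈ {−1,+1}^n and let μ, ν be indices with σ_μ = +1 and σ_ν = −1. Let σ' be the same as σ except that σ'_μ = −1 and σ'_ν = +1. Assume the inequalities (k_μ² − k_ν²)·(ω_n/k_n)² ≥ ω_μ² − ω_ν² and (k_μ² − k_ν²)·( (1/n)·Σ_{ι=1}^n k_ι )² ≥ ω_μ² − ω_ν² hold. If f_σ has no positive roots, then f_{σ'} also has no positive roots. -/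
set_option maxHeartbeats 1000000 in
/-- Lemma 2.5: under IC1–IC3, suppose `σ μ = +1` and `σ ν = -1`, and `σ'`
is `σ` with the entries at `μ` and `ν` swapped.  If
`(k μ² - k ν²)(ω_n/k_n)² ≥ ω μ² - ω ν²` and
`(k μ² - k ν²)((1/n) ∑ ι, k ι)² ≥ ω μ² - ω ν²`, and `f_σ` has no positive roots,
then `f_{σ'}` has no positive roots either. -/
theorem no_posRoot_of_swap (n : ℕ) (hn : 2 ≤ n) (ω k σ : Fin n → ℝ)
    (hIC1 : ∑ μ, ω μ = 0) (hIC2 : ω ≠ 0)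
    (hIC3pos : ∀ μ, 0 < k μ)
    (hIC3ord : ∀ μ ν : Fin n, μ ≤ ν → |ω μ / k μ| ≤ |ω ν / k ν|)
    (hσ : ∀ μ, σ μ = -1 ∨ σ μ = 1)
    (μ ν : Fin n) (hμ : σ μ = 1) (hν : σ ν = -1)
    (σ' : Fin n → ℝ) (hσ'μ : σ' μ = -1) (hσ'ν : σ' ν = 1)
    (hσ'rest : ∀ ι, ι ≠ μ → ι ≠ ν → σ' ι = σ ι)
    (hineq1 : (ω μ) ^ 2 - (ω ν) ^ 2 ≤
      ((k μ) ^ 2 - (k ν) ^ 2) * (ω ⟨n - 1, by omega⟩ / k ⟨n - 1, by omega⟩) ^ 2)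
    (hineq2 : (ω μ) ^ 2 - (ω ν) ^ 2 ≤
      ((k μ) ^ 2 - (k ν) ^ 2) * ((1 / (n : ℝ)) * ∑ ι, k ι) ^ 2)
    (hno : ¬ ∃ R : ℝ, IsPosRoot n ω k σ R) :
    ¬ ∃ R : ℝ, IsPosRoot n ω k σ' R := by
  rintro ⟨R, hRpos, hdom, hroot⟩
  have hμν : μ ≠ ν := by
    intro h; rw [h, hν] at hμ; norm_num at hμ
  have hn0 : (0:ℝ) < (n:ℝ) := by
    have : 0 < n := by omega
    exact_mod_cast this
  set S : ℝ := (1 / (n : ℝ)) * ∑ ι, k ι with hSdef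
  have hSpos : 0 < S := by
    apply mul_pos (by positivity)
    exact Finset.sum_pos (fun ι _ => hIC3pos ι) ⟨⟨0, by omega⟩, Finset.mem_univ _⟩
  -- upper bound for any sign pattern bounded by 1
  have hub : ∀ (τ : Fin n → ℝ), (∀ ι, τ ι ≤ 1) → ∀ x : ℝ, 0 ≤ x →
      fSigma n ω k τ x ≤ -x + S * Real.sqrt x := by
    intro τ hτ x hx
    unfold fSigma
    have hsum : ∑ ι, τ ι * Real.sqrt ((k ι)^2 * x - (ω ι)^2) ≤ ∑ ι, k ι * Real.sqrt x := by
      apply Finset.sum_le_sum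
      intro ι _
      have h1 : Real.sqrt ((k ι)^2 * x - (ω ι)^2) ≤ Real.sqrt ((k ι)^2 * x) :=
        Real.sqrt_le_sqrt (by nlinarith [sq_nonneg (ω ι)])
      have h2 : Real.sqrt ((k ι)^2 * x) = k ι * Real.sqrt x := by
        rw [Real.sqrt_mul (sq_nonneg _), Real.sqrt_sq (hIC3pos ι).le]
      calc τ ι * Real.sqrt ((k ι)^2 * x - (ω ι)^2)
          ≤ 1 * Real.sqrt ((k ι)^2 * x - (ω ι)^2) :=
            mul_le_mul_of_nonneg_right (hτ ι) (Real.sqrt_nonneg _)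
        _ = Real.sqrt ((k ι)^2 * x - (ω ι)^2) := one_mul _
        _ ≤ k ι * Real.sqrt x := h2 ▸ h1
    have h3 : (1/(n:ℝ)) * ∑ ι, τ ι * Real.sqrt ((k ι)^2 * x - (ω ι)^2)
        ≤ (1/(n:ℝ)) * ∑ ι, k ι * Real.sqrt x :=
      mul_le_mul_of_nonneg_left hsum (by positivity)
    have h4 : ∑ ι, k ι * Real.sqrt x = (∑ ι, k ι) * Real.sqrt x := by
      rw [Finset.sum_mul]
    rw [h4] at h3
    have : (1/(n:ℝ)) * ((∑ ι, k ι) * Real.sqrt x) = S * Real.sqrt x := by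
      rw [hSdef]; ring
    rw [this] at h3
    linarith
  have hτ' : ∀ ι, σ' ι ≤ 1 := by
    intro ι
    by_cases h1 : ι = μ
    · rw [h1, hσ'μ]; norm_num
    by_cases h2 : ι = ν
    · rw [h2, hσ'ν]
    · rw [hσ'rest ι h1 h2]; rcases hσ ι with h | h <;> rw [h] <;> norm_num
  have hτ : ∀ ι, σ ι ≤ 1 := by
    intro ι; rcases hσ ι with h | h <;> rw [h] <;> norm_num
  by_cases hRS : R ≤ S^2
  · -- case R ≤ S²: f_σ(R) ≥ f_{σ'}(R) = 0, and f_σ large-R negative, IVT gives root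
    set m : Fin n := ⟨n - 1, by omega⟩ with hm
    have hR0 : (ω m / k m)^2 ≤ R := by
      have hd := hdom m
      have hk := hIC3pos m
      rw [div_pow, div_le_iff₀ (by positivity)]
      nlinarith
    have key : (k ν)^2 * R - (ω ν)^2 ≤ (k μ)^2 * R - (ω μ)^2 := by
      rcases le_or_gt 0 ((k μ)^2 - (k ν)^2) with hA | hA
      · have := mul_le_mul_of_nonneg_left hR0 hA
        nlinarith [hineq1]
      · have := mul_le_mul_of_nonpos_left hRS hA.le
        nlinarith [hineq2]
    have hg : Real.sqrt ((k ν)^2 * R - (ω ν)^2) ≤ Real.sqrt ((k μ)^2 * R - (ω μ)^2) :=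
      Real.sqrt_le_sqrt key
    have hsumdiff : ∑ ι, σ ι * Real.sqrt ((k ι)^2 * R - (ω ι)^2)
        - ∑ ι, σ' ι * Real.sqrt ((k ι)^2 * R - (ω ι)^2)
        = 2 * Real.sqrt ((k μ)^2 * R - (ω μ)^2) - 2 * Real.sqrt ((k ν)^2 * R - (ω ν)^2) := by
      rw [← Finset.sum_sub_distrib]
      rw [← Finset.sum_subset (Finset.subset_univ ({μ, ν} : Finset (Fin n)))
        (fun ι _ hι => by
          simp only [Finset.mem_insert, Finset.mem_singleton, not_or] at hι
          rw [hσ'rest ι hι.1 hι.2]; ring)]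
      rw [Finset.sum_pair hμν, hμ, hν, hσ'μ, hσ'ν]
      ring
    have hfσR : 0 ≤ fSigma n ω k σ R := by
      have hd : fSigma n ω k σ R - fSigma n ω k σ' R
          = (1/(n:ℝ)) * (2 * Real.sqrt ((k μ)^2 * R - (ω μ)^2)
            - 2 * Real.sqrt ((k ν)^2 * R - (ω ν)^2)) := by
        unfold fSigma
        rw [← hsumdiff]; ring
      have hpos : 0 ≤ (1/(n:ℝ)) * (2 * Real.sqrt ((k μ)^2 * R - (ω μ)^2)
          - 2 * Real.sqrt ((k ν)^2 * R - (ω ν)^2)) := by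
        apply mul_nonneg (by positivity); linarith
      rw [hroot] at hd
      linarith
    set R' : ℝ := S^2 + 1 with hR'
    have hRR' : R ≤ R' := by nlinarith
    have hfR' : fSigma n ω k σ R' < 0 := by
      have h1 := hub σ hτ R' (by positivity)
      have h2 : S < Real.sqrt R' := by
        rw [show S = Real.sqrt (S^2) from (Real.sqrt_sq hSpos.le).symm]
        exact Real.sqrt_lt_sqrt (by positivity) (by nlinarith)
      have h3 : 0 < Real.sqrt R' := Real.sqrt_pos.mpr (by positivity)
      have h4 : Real.sqrt R' * Real.sqrt R' = R' := Real.mul_self_sqrt (by positivity)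
      nlinarith
    have hcont : ContinuousOn (fSigma n ω k σ) (Set.Icc R R') := by
      apply Continuous.continuousOn
      unfold fSigma
      apply Continuous.add (by continuity)
      apply Continuous.mul continuous_const
      apply continuous_finset_sum
      intro ι _
      exact continuous_const.mul (Real.continuous_sqrt.comp (by continuity))
    have hmem : (0:ℝ) ∈ Set.Icc (fSigma n ω k σ R') (fSigma n ω k σ R) := ⟨hfR'.le, hfσR⟩
    obtain ⟨c, hc, hfc⟩ := intermediate_value_Icc' hRR' hcont hmem
    exact hno ⟨c, lt_of_lt_of_le hRpos hc.1,
      fun ι => le_trans (hdom ι) (mul_le_mul_of_nonneg_left hc.1 (sq_nonneg _)), hfc⟩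
  · -- case R > S²: f_{σ'}(R) < 0, contradicting the root
    push_neg at hRS
    have h1 := hub σ' hτ' R hRpos.le
    have h2 : S < Real.sqrt R := by
      rw [show S = Real.sqrt (S^2) from (Real.sqrt_sq hSpos.le).symm]
      exact Real.sqrt_lt_sqrt (by positivity) hRS
    have h3 : 0 < Real.sqrt R := Real.sqrt_pos.mpr hRpos
    have h4 : Real.sqrt R * Real.sqrt R = R := Real.mul_self_sqrt hRpos.le
    rw [hroot] at h1
    nlinarith
end

section
/- Suppose ω ∈ ℝ^n and k ∈ ℝ_{>0}^n satisfy IC1, IC2, IC3, and additionally IC4: k_1 ≥ k_2 ≥ ⋯ ≥ k_n. Let σ ∈ {−1,+1}^n and let μ, ν be indices with μ < ν, σ_μ = +1, and σ_ν = −1. Let σ' be the same as σ except that σ'_μ = −1 and σ'_ν = +1. If f_σ has no positive roots, then f_{σ'} also has no positive roots. -/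
open Filter Finset

theorem Continuous.exists_ge_eq_zero_of_eventually_neg {α : Type*}
    [ConditionallyCompleteLinearOrder α] [TopologicalSpace α] [OrderTopology α]
    [DenselyOrdered α] {f : α → ℝ} (hf : Continuous f) {a : α} (ha : 0 ≤ f a)
    (hneg : ∀ᶠ x in atTop, f x < 0) : ∃ c, a ≤ c ∧ f c = 0 := by
  obtain ⟨b, hfb, hab⟩ := (hneg.and (eventually_ge_atTop a)).exists
  exact isPreconnected_Ici.intermediate_value hab Set.self_mem_Ici hf.continuousOn ⟨hfb.le, ha⟩

theorem radicand_le_of_abs_div_le {a b x y R : ℝ} (hb : 0 < b) (hba : b ≤ a)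
    (hxy : |x / a| ≤ |y / b|) (hR : y ^ 2 ≤ b ^ 2 * R) :
    b ^ 2 * R - y ^ 2 ≤ a ^ 2 * R - x ^ 2 := by
  have ha : 0 < a := hb.trans_le hba
  have hx : x ^ 2 = a ^ 2 * (x / a) ^ 2 := by field_simp
  have hy : y ^ 2 = b ^ 2 * (y / b) ^ 2 := by field_simp
  have hxy' : (x / a) ^ 2 ≤ (y / b) ^ 2 := sq_le_sq.2 hxy
  have hRt : (y / b) ^ 2 ≤ R := by
    rw [div_pow, div_le_iff₀ (by positivity)]; linarith
  nlinarith [mul_le_mul_of_nonneg_left hxy' (sq_nonneg a),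
    mul_le_mul_of_nonneg_left hRt (sub_nonneg.2 (pow_le_pow_left₀ hb.le hba 2))]

section fSigma

variable {n : ℕ} {ω k σ σ' : Fin n → ℝ}

theorem continuous_fSigma : Continuous (fSigma n ω k σ) := by
  unfold fSigma
  fun_prop

theorem fSigma_eventually_neg (hσ : ∀ ι, σ ι ≤ 1) : ∀ᶠ R in atTop, fSigma n ω k σ R < 0 := by
  set C := (1 / (n : ℝ)) * ∑ ι, |k ι|
  have hC : 0 ≤ C := by positivity
  filter_upwards [eventually_gt_atTop (C ^ 2)] with R hR
  have hRpos : 0 < R := (sq_nonneg C).trans_lt hR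
  have hterm : ∀ ι, σ ι * √(k ι ^ 2 * R - ω ι ^ 2) ≤ |k ι| * √R := fun ι => calc
    σ ι * √(k ι ^ 2 * R - ω ι ^ 2) ≤ √(k ι ^ 2 * R - ω ι ^ 2) :=
      mul_le_of_le_one_left (Real.sqrt_nonneg _) (hσ ι)
    _ ≤ √(k ι ^ 2 * R) := Real.sqrt_le_sqrt (by nlinarith [sq_nonneg (ω ι)])
    _ = |k ι| * √R := by rw [Real.sqrt_mul (sq_nonneg _), Real.sqrt_sq_eq_abs]
  have hCR : C * √R < R := by
    have hCs : C < √R := Real.lt_sqrt hC |>.2 hR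
    nlinarith [Real.mul_self_sqrt hRpos.le, Real.sqrt_pos.2 hRpos]
  have hsum : (1 / (n : ℝ)) * ∑ ι, σ ι * √(k ι ^ 2 * R - ω ι ^ 2) ≤ C * √R := by
    rw [mul_assoc, sum_mul]
    exact mul_le_mul_of_nonneg_left (sum_le_sum fun ι _ => hterm ι) (by positivity)
  unfold fSigma
  linarith

theorem fSigma_le_of_swap {μ ν : Fin n} (hμν : μ ≠ ν) (hμ : σ μ = 1) (hν : σ ν = -1)
    (hσ'μ : σ' μ = -1) (hσ'ν : σ' ν = 1) (hσ'rest : ∀ ι, ι ≠ μ → ι ≠ ν → σ' ι = σ ι) {R : ℝ}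
    (hR : k ν ^ 2 * R - ω ν ^ 2 ≤ k μ ^ 2 * R - ω μ ^ 2) :
    fSigma n ω k σ' R ≤ fSigma n ω k σ R := by
  set s := fun ι => √(k ι ^ 2 * R - ω ι ^ 2)
  have hdiff : ∑ ι, σ ι * s ι - ∑ ι, σ' ι * s ι = 2 * (s μ - s ν) := by
    rw [← sum_sub_distrib, ← sum_subset (subset_univ {μ, ν}), sum_pair hμν, hμ, hν, hσ'μ, hσ'ν]
    · ring
    · intro ι _ hι
      simp only [mem_insert, mem_singleton, not_or] at hι
      rw [hσ'rest ι hι.1 hι.2, sub_self]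
  have hs : s ν ≤ s μ := Real.sqrt_le_sqrt hR
  have : ∑ ι, σ' ι * s ι ≤ ∑ ι, σ ι * s ι := by linarith
  unfold fSigma
  gcongr

end fSigma

theorem no_posRoot_of_swap_of_antitone_general (n : ℕ) (ω k σ : Fin n → ℝ)
    (hIC3pos : ∀ μ, 0 < k μ)
    (hIC3ord : ∀ μ ν : Fin n, μ ≤ ν → |ω μ / k μ| ≤ |ω ν / k ν|)
    (hIC4 : ∀ μ ν : Fin n, μ ≤ ν → k ν ≤ k μ)
    (hσ : ∀ μ, σ μ = -1 ∨ σ μ = 1)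
    (μ ν : Fin n) (hμν : μ < ν) (hμ : σ μ = 1) (hν : σ ν = -1)
    (σ' : Fin n → ℝ) (hσ'μ : σ' μ = -1) (hσ'ν : σ' ν = 1)
    (hσ'rest : ∀ ι, ι ≠ μ → ι ≠ ν → σ' ι = σ ι)
    (hno : ¬ ∃ R : ℝ, IsPosRoot n ω k σ R) :
    ¬ ∃ R : ℝ, IsPosRoot n ω k σ' R := by
  rintro ⟨R, hR, hdom, hroot⟩
  have hradicand := radicand_le_of_abs_div_le (hIC3pos ν) (hIC4 μ ν hμν.le)
    (hIC3ord μ ν hμν.le) (hdom ν)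
  have hσle : ∀ ι, σ ι ≤ 1 := fun ι => by rcases hσ ι with h | h <;> norm_num [h]
  obtain ⟨R', hRR', hR'⟩ := continuous_fSigma.exists_ge_eq_zero_of_eventually_neg
    (hroot ▸ fSigma_le_of_swap hμν.ne hμ hν hσ'μ hσ'ν hσ'rest hradicand)
    (fSigma_eventually_neg hσle)
  exact hno ⟨R', hR.trans_le hRR', fun ι => (hdom ι).trans (by gcongr), hR'⟩

/-- Lemma 2.6: under IC1–IC4 (IC4: `k` nonincreasing), suppose `μ < ν`,
`σ μ = +1` and `σ ν = -1`, and `σ'` is `σ` with the entries at `μ` and `ν` swapped.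
If `f_σ` has no positive roots, then `f_{σ'}` has no positive roots either. -/
theorem no_posRoot_of_swap_of_antitone (n : ℕ) (hn : 2 ≤ n) (ω k σ : Fin n → ℝ)
    (hIC1 : ∑ μ, ω μ = 0) (hIC2 : ω ≠ 0)
    (hIC3pos : ∀ μ, 0 < k μ)
    (hIC3ord : ∀ μ ν : Fin n, μ ≤ ν → |ω μ / k μ| ≤ |ω ν / k ν|)
    (hIC4 : ∀ μ ν : Fin n, μ ≤ ν → k ν ≤ k μ)
    (hσ : ∀ μ, σ μ = -1 ∨ σ μ = 1)
    (μ ν : Fin n) (hμν : μ < ν) (hμ : σ μ = 1) (hν : σ ν = -1)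
    (σ' : Fin n → ℝ) (hσ'μ : σ' μ = -1) (hσ'ν : σ' ν = 1)
    (hσ'rest : ∀ ι, ι ≠ μ → ι ≠ ν → σ' ι = σ ι)
    (hno : ¬ ∃ R : ℝ, IsPosRoot n ω k σ R) :
    ¬ ∃ R : ℝ, IsPosRoot n ω k σ' R :=
  no_posRoot_of_swap_of_antitone_general n ω k σ hIC3pos hIC3ord hIC4 hσ μ ν hμν hμ hν σ' hσ'μ hσ'ν
    hσ'rest hno
end

section
/- Suppose ω ∈ ℝ^n and k ∈ ℝ_{>0}^n satisfy IC1, IC2, IC3, and IC4. If f_σ has no positive roots for the all-plus sign pattern σ = (+1, +1, …, +1), then for every sign pattern σ' ∈ {−1,+1}^n, f_{σ'} has no positive roots. -/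
/-- Theorem 2.7, case 1: under IC1–IC4, if `f_σ` has no positive roots
for the all-plus sign pattern `σ = (+1,…,+1)`, then `f_{σ'}` has no positive roots
for any sign pattern `σ' ∈ {-1,+1}^n`. -/
theorem no_posRoot_all_of_allPlus (n : ℕ) (hn : 2 ≤ n) (ω k : Fin n → ℝ)
    (hIC1 : ∑ μ, ω μ = 0) (hIC2 : ω ≠ 0)
    (hIC3pos : ∀ μ, 0 < k μ)
    (hIC3ord : ∀ μ ν : Fin n, μ ≤ ν → |ω μ / k μ| ≤ |ω ν / k ν|)
    (hIC4 : ∀ μ ν : Fin n, μ ≤ ν → k ν ≤ k μ)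
    (hno : ¬ ∃ R : ℝ, IsPosRoot n ω k (fun _ => 1) R) :
    ∀ σ' : Fin n → ℝ, (∀ μ, σ' μ = -1 ∨ σ' μ = 1) →
      ¬ ∃ R : ℝ, IsPosRoot n ω k σ' R := by
  rintro σ' hσ' ⟨R, hRpos, hdom, hroot⟩
  apply hno
  set g : ℝ → ℝ := fSigma n ω k (fun _ => 1) with hg
  have hninv : (0:ℝ) ≤ 1 / (n:ℝ) := by positivity
  -- g R ≥ 0
  have hgR : 0 ≤ g R := by
    rw [← hroot]
    unfold g
    unfold fSigma
    gcongr with μ _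
    rcases hσ' μ with h | h <;> rw [h] <;> norm_num
  set K : ℝ := ∑ μ, k μ with hK
  have hKnn : 0 ≤ K := Finset.sum_nonneg fun μ _ => (hIC3pos μ).le
  set R' : ℝ := max R ((K+1)^2) with hR'
  have hRR' : R ≤ R' := le_max_left _ _
  have hR'big : (K+1)^2 ≤ R' := le_max_right _ _
  have hR'nn : 0 ≤ R' := le_trans (by positivity) hR'big
  have hs : K + 1 ≤ Real.sqrt R' := by
    have := Real.sqrt_le_sqrt hR'big
    rwa [Real.sqrt_sq (by linarith)] at this
  -- g R' < 0
  have hgR' : g R' < 0 := by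
    have hsum : ∑ μ, (1:ℝ) * Real.sqrt ((k μ)^2 * R' - (ω μ)^2) ≤ K * Real.sqrt R' := by
      rw [hK, Finset.sum_mul]
      apply Finset.sum_le_sum
      intro μ _
      rw [one_mul]
      have h1 : Real.sqrt ((k μ)^2 * R' - (ω μ)^2) ≤ Real.sqrt ((k μ)^2 * R') :=
        Real.sqrt_le_sqrt (by nlinarith [sq_nonneg (ω μ)])
      have h2 : Real.sqrt ((k μ)^2 * R') = k μ * Real.sqrt R' := by
        rw [Real.sqrt_mul (sq_nonneg _), Real.sqrt_sq (hIC3pos μ).le]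
      linarith [h1, h2.le]
    have hsumnn : (0:ℝ) ≤ ∑ μ, (1:ℝ) * Real.sqrt ((k μ)^2 * R' - (ω μ)^2) :=
      Finset.sum_nonneg fun μ _ => by positivity
    have hninv1 : 1 / (n:ℝ) ≤ 1 := by
      apply div_le_one_of_le₀ <;> [exact_mod_cast Nat.one_le_of_lt hn; positivity]
    have hfrac : (1 / (n:ℝ)) * ∑ μ, (1:ℝ) * Real.sqrt ((k μ)^2 * R' - (ω μ)^2)
        ≤ K * Real.sqrt R' := by
      calc (1 / (n:ℝ)) * ∑ μ, (1:ℝ) * Real.sqrt ((k μ)^2 * R' - (ω μ)^2)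
          ≤ 1 * ∑ μ, (1:ℝ) * Real.sqrt ((k μ)^2 * R' - (ω μ)^2) := by
            exact mul_le_mul_of_nonneg_right hninv1 hsumnn
        _ = _ := one_mul _
        _ ≤ K * Real.sqrt R' := hsum
    have hsq : Real.sqrt R' * Real.sqrt R' = R' := Real.mul_self_sqrt hR'nn
    have : K * Real.sqrt R' < R' := by nlinarith [hs, hKnn]
    unfold g
    unfold fSigma
    linarith
  -- continuity of g
  have hcont : Continuous g := by
    unfold g
    unfold fSigma
    apply Continuous.add
    · exact continuous_neg
    · apply Continuous.mul continuous_const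
      apply continuous_finset_sum
      intro μ _
      exact Continuous.mul continuous_const
        (Real.continuous_sqrt.comp (by continuity))
  -- IVT
  have h0mem : (0:ℝ) ∈ Set.Icc (g R') (g R) := ⟨hgR'.le, hgR⟩
  obtain ⟨R₁, hR₁mem, hR₁root⟩ :=
    intermediate_value_Icc' hRR' hcont.continuousOn h0mem
  refine ⟨R₁, lt_of_lt_of_le hRpos hR₁mem.1, ?_, hR₁root⟩
  intro μ
  have := hdom μ
  nlinarith [sq_nonneg (k μ), hR₁mem.1]
end

section
/- Suppose ω ∈ ℝ^n and k ∈ ℝ_{>0}^n satisfy IC1, IC2, IC3, and IC4. Let σ ∈ {−1,+1}^n have exactly one entry equal to −1 and suppose f_σ has no positive roots. Then for every sign pattern σ' ∈ {−1,+1}^n with N(σ') < N(σ), f_{σ'} also has no positive roots. -/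
open scoped Classical

/-- The binary number associated with a sign pattern `σ ∈ {-1,+1}^n`: the `μ`-th
binary digit (from the most significant) is `1` if `σ μ = +1` and `0` if `σ μ = -1`. -/
noncomputable def signNum (n : ℕ) (σ : Fin n → ℝ) : ℕ :=
  ∑ μ : Fin n, if σ μ = 1 then 2 ^ (n - 1 - (μ : ℕ)) else 0

lemma two_pow_sum_lt (t : ℕ) : ∑ j ∈ Finset.range t, 2^j < 2^t := by
  induction t with
  | zero => simp
  | succ t ih => rw [Finset.sum_range_succ, pow_succ]; omega

lemma sum_gt_lt (n : ℕ) (m : Fin n) :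
    ∑ μ ∈ Finset.univ.filter (fun μ : Fin n => m < μ), 2^(n-1-(μ:ℕ)) < 2^(n-1-(m:ℕ)) := by
  have hinj : ∀ a ∈ Finset.univ.filter (fun μ : Fin n => m < μ),
      ∀ b ∈ Finset.univ.filter (fun μ : Fin n => m < μ),
      (fun μ : Fin n => n-1-(μ:ℕ)) a = (fun μ : Fin n => n-1-(μ:ℕ)) b → a = b := by
    intro a _ b _ h
    simp only at h
    have := a.isLt; have := b.isLt
    exact Fin.ext (by omega)
  rw [← Finset.sum_image hinj]
  calc ∑ j ∈ (Finset.univ.filter (fun μ : Fin n => m < μ)).image (fun μ : Fin n => n-1-(μ:ℕ)), 2^j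
      ≤ ∑ j ∈ Finset.range (n-1-(m:ℕ)), 2^j := by
        apply Finset.sum_le_sum_of_subset
        intro j hj
        simp only [Finset.mem_image, Finset.mem_filter, Finset.mem_univ, true_and,
          Finset.mem_range] at hj ⊢
        obtain ⟨μ, hμ, rfl⟩ := hj
        have := μ.isLt
        have hlt : (m:ℕ) < (μ:ℕ) := hμ
        omega
    _ < 2^(n-1-(m:ℕ)) := two_pow_sum_lt _

lemma signNum_le_aux (n : ℕ) (σ σ' : Fin n → ℝ) (m : Fin n) (hm : σ m = -1)
    (hσ1 : ∀ μ, μ ≠ m → σ μ = 1) (h1 : ∀ j : Fin n, j ≤ m → σ' j = 1) :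
    signNum n σ ≤ signNum n σ' := by
  have e1 : signNum n σ = ∑ μ ∈ Finset.univ.erase m, 2^(n-1-(μ:ℕ)) := by
    rw [signNum, ← Finset.sum_erase_add Finset.univ _ (Finset.mem_univ m)]
    rw [if_neg (by rw [hm]; norm_num), add_zero]
    exact Finset.sum_congr rfl fun μ hμ => if_pos (hσ1 μ (Finset.ne_of_mem_erase hμ))
  have e2 : ∑ μ ∈ Finset.univ.filter (fun μ : Fin n => μ ≤ m), 2^(n-1-(μ:ℕ))
      ≤ signNum n σ' := by
    rw [signNum]
    calc ∑ μ ∈ Finset.univ.filter (fun μ : Fin n => μ ≤ m), 2^(n-1-(μ:ℕ))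
        = ∑ μ ∈ Finset.univ.filter (fun μ : Fin n => μ ≤ m),
            (if σ' μ = 1 then 2^(n-1-(μ:ℕ)) else 0) :=
        Finset.sum_congr rfl fun μ hμ =>
          (if_pos (h1 μ (Finset.mem_filter.mp hμ).2)).symm
      _ ≤ _ := Finset.sum_le_sum_of_subset (Finset.filter_subset _ _)
  have d1 : ∑ μ ∈ Finset.univ.erase m, 2^(n-1-(μ:ℕ))
      = (∑ μ ∈ Finset.univ.filter (fun μ : Fin n => μ < m), 2^(n-1-(μ:ℕ)))
        + ∑ μ ∈ Finset.univ.filter (fun μ : Fin n => m < μ), 2^(n-1-(μ:ℕ)) := by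
    rw [← Finset.sum_filter_add_sum_filter_not (Finset.univ.erase m) (fun μ => μ < m)]
    congr 1
    · apply Finset.sum_congr _ (fun _ _ => rfl)
      ext μ
      simp only [Finset.mem_filter, Finset.mem_erase, Finset.mem_univ, true_and,
        Fin.lt_def, ne_eq, and_true, Fin.ext_iff]
      omega
    · apply Finset.sum_congr _ (fun _ _ => rfl)
      ext μ
      simp only [Finset.mem_filter, Finset.mem_erase, Finset.mem_univ, true_and,
        Fin.lt_def, not_lt, Fin.le_def, ne_eq, and_true, Fin.ext_iff]
      omega
  have d2 : ∑ μ ∈ Finset.univ.filter (fun μ : Fin n => μ ≤ m), 2^(n-1-(μ:ℕ))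
      = (∑ μ ∈ Finset.univ.filter (fun μ : Fin n => μ < m), 2^(n-1-(μ:ℕ)))
        + 2^(n-1-(m:ℕ)) := by
    rw [← Finset.sum_filter_add_sum_filter_not
      (Finset.univ.filter (fun μ : Fin n => μ ≤ m)) (fun μ => μ < m)]
    congr 1
    · apply Finset.sum_congr _ (fun _ _ => rfl)
      ext μ
      simp only [Finset.filter_filter, Finset.mem_filter, Finset.mem_univ, true_and,
        Fin.lt_def, Fin.le_def, ne_eq, and_true]
      omega
    · have : (Finset.univ.filter (fun μ : Fin n => μ ≤ m)).filter (fun μ => ¬ μ < m)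
          = {m} := by
        ext μ
        simp only [Finset.filter_filter, Finset.mem_filter, Finset.mem_univ, true_and,
          Fin.lt_def, not_lt, Fin.le_def, ne_eq, and_true, Finset.mem_singleton, Fin.ext_iff]
        omega
      rw [this, Finset.sum_singleton]
  have := sum_gt_lt n m
  omega

/-- Theorem 2.7, case 2: under IC1–IC4, if `σ` has exactly one entry
equal to `-1` and `f_σ` has no positive roots, then `f_{σ'}` has no positive roots
for every sign pattern `σ'` that is smaller than `σ` in the binary representation. -/
theorem no_posRoot_of_smaller_of_one_minus (n : ℕ) (hn : 2 ≤ n) (ω k σ : Fin n → ℝ)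
    (hIC1 : ∑ μ, ω μ = 0) (hIC2 : ω ≠ 0)
    (hIC3pos : ∀ μ, 0 < k μ)
    (hIC3ord : ∀ μ ν : Fin n, μ ≤ ν → |ω μ / k μ| ≤ |ω ν / k ν|)
    (hIC4 : ∀ μ ν : Fin n, μ ≤ ν → k ν ≤ k μ)
    (hσ : ∀ μ, σ μ = -1 ∨ σ μ = 1)
    (hone : ∃! μ : Fin n, σ μ = -1)
    (hno : ¬ ∃ R : ℝ, IsPosRoot n ω k σ R) :
    ∀ σ' : Fin n → ℝ, (∀ μ, σ' μ = -1 ∨ σ' μ = 1) →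
      signNum n σ' < signNum n σ →
      ¬ ∃ R : ℝ, IsPosRoot n ω k σ' R := by
  intro σ' hσ' hlt hroot'
  obtain ⟨R, hR0, hdom, hfz⟩ := hroot'
  obtain ⟨m, hm, hmuniq⟩ := hone
  have hσ1 : ∀ μ, μ ≠ m → σ μ = 1 := fun μ hμ =>
    (hσ μ).resolve_left (fun h => hμ (hmuniq μ h))
  -- there is a `-1` in σ' at some index ≤ m
  have hex : ∃ j : Fin n, j ≤ m ∧ σ' j = -1 := by
    by_contra h
    push_neg at h
    have h1 : ∀ j : Fin n, j ≤ m → σ' j = 1 := fun j hj =>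
      (hσ' j).resolve_left (h j hj)
    exact absurd hlt (not_lt.mpr (signNum_le_aux n σ σ' m hm hσ1 h1))
  obtain ⟨j, hjm, hj⟩ := hex
  set g : Fin n → ℝ := fun μ => Real.sqrt ((k μ)^2 * R - (ω μ)^2) with hg
  have hgnn : ∀ μ, 0 ≤ g μ := fun μ => Real.sqrt_nonneg _
  -- monotonicity: g m ≤ g j
  have hgm : g m ≤ g j := by
    apply Real.sqrt_le_sqrt
    have hkj := hIC3pos j
    have hkm := hIC3pos m
    have hk := hIC4 j m hjm
    have hr := hIC3ord j m hjm
    have hr' : |ω j| * k m ≤ |ω m| * k j := by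
      rw [abs_div, abs_div, abs_of_pos hkj, abs_of_pos hkm, div_le_div_iff₀ hkj hkm] at hr
      linarith
    have hr2 : (ω j)^2 * (k m)^2 ≤ (ω m)^2 * (k j)^2 := by
      have h2 : (|ω j| * k m)^2 ≤ (|ω m| * k j)^2 := by
        apply pow_le_pow_left₀ (by positivity) hr'
      calc (ω j)^2 * (k m)^2 = (|ω j| * k m)^2 := by rw [mul_pow, sq_abs]
        _ ≤ (|ω m| * k j)^2 := h2
        _ = (ω m)^2 * (k j)^2 := by rw [mul_pow, sq_abs]
    have hdm := hdom m
    have h3 : (k m)^2 ≤ (k j)^2 := by nlinarith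
    have h4 : 0 ≤ ((k j)^2 - (k m)^2) * ((k m)^2*R - (ω m)^2) := by nlinarith
    nlinarith [mul_pos hkm hkm]
  -- pointwise comparison of sums
  have hsum' : ∑ μ, σ' μ * g μ ≤ (∑ μ, g μ) - 2 * g j := by
    rw [← Finset.sum_erase_add Finset.univ (fun μ => σ' μ * g μ) (Finset.mem_univ j)]
    have h1 : ∑ μ ∈ Finset.univ.erase j, σ' μ * g μ ≤ ∑ μ ∈ Finset.univ.erase j, g μ := by
      apply Finset.sum_le_sum
      intro μ _
      rcases hσ' μ with h | h <;> rw [h] <;> nlinarith [hgnn μ]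
    have h2 : ∑ μ ∈ Finset.univ.erase j, g μ = (∑ μ, g μ) - g j :=
      Finset.sum_erase_eq_sub (Finset.mem_univ j)
    rw [hj]
    linarith
  have hsum : ∑ μ, σ μ * g μ = (∑ μ, g μ) - 2 * g m := by
    rw [← Finset.sum_erase_add Finset.univ (fun μ => σ μ * g μ) (Finset.mem_univ m)]
    have h1 : ∑ μ ∈ Finset.univ.erase m, σ μ * g μ = ∑ μ ∈ Finset.univ.erase m, g μ := by
      apply Finset.sum_congr rfl
      intro μ hμ
      rw [hσ1 μ (Finset.ne_of_mem_erase hμ), one_mul]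
    have h2 : ∑ μ ∈ Finset.univ.erase m, g μ = (∑ μ, g μ) - g m :=
      Finset.sum_erase_eq_sub (Finset.mem_univ m)
    rw [hm, h1, h2]
    ring
  have hnpos : (0:ℝ) < (n:ℝ) := by positivity
  have hcomp : fSigma n ω k σ' R ≤ fSigma n ω k σ R := by
    unfold fSigma
    have : ∑ μ, σ' μ * g μ ≤ ∑ μ, σ μ * g μ := by rw [hsum]; linarith
    have h1n : (0:ℝ) ≤ 1 / (n:ℝ) := by positivity
    have := mul_le_mul_of_nonneg_left this h1n
    linarith
  have hge : 0 ≤ fSigma n ω k σ R := by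
    rw [← hfz]; exact hcomp
  -- find a large R' where f_σ is negative
  set c : ℝ := (1 / (n:ℝ)) * ∑ μ, k μ with hc
  have hcnn : 0 ≤ c := by
    apply mul_nonneg (by positivity)
    exact Finset.sum_nonneg fun μ _ => (hIC3pos μ).le
  set R' : ℝ := max R (c^2 + 1) with hR'
  have hRR' : R ≤ R' := le_max_left _ _
  have hR'pos : 0 < R' := lt_of_lt_of_le hR0 hRR'
  have hR'c : c^2 < R' := lt_of_lt_of_le (by linarith) (le_max_right _ _)
  have hneg : fSigma n ω k σ R' < 0 := by
    have hterm : ∀ μ, σ μ * Real.sqrt ((k μ)^2 * R' - (ω μ)^2) ≤ k μ * Real.sqrt R' := by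
      intro μ
      have h1 : Real.sqrt ((k μ)^2 * R' - (ω μ)^2) ≤ Real.sqrt ((k μ)^2 * R') :=
        Real.sqrt_le_sqrt (by nlinarith [sq_nonneg (ω μ)])
      have h2 : Real.sqrt ((k μ)^2 * R') = k μ * Real.sqrt R' := by
        rw [Real.sqrt_mul (sq_nonneg _), Real.sqrt_sq (hIC3pos μ).le]
      have h3 : σ μ * Real.sqrt ((k μ)^2 * R' - (ω μ)^2)
          ≤ Real.sqrt ((k μ)^2 * R' - (ω μ)^2) := by
        rcases hσ μ with h | h <;> rw [h] <;> nlinarith [Real.sqrt_nonneg ((k μ)^2 * R' - (ω μ)^2)]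
      linarith [h2 ▸ h1]
    have hsb : ∑ μ, σ μ * Real.sqrt ((k μ)^2 * R' - (ω μ)^2)
        ≤ (∑ μ, k μ) * Real.sqrt R' := by
      rw [Finset.sum_mul]
      exact Finset.sum_le_sum fun μ _ => hterm μ
    have hfb : fSigma n ω k σ R' ≤ -R' + c * Real.sqrt R' := by
      unfold fSigma
      have h1n : (0:ℝ) ≤ 1 / (n:ℝ) := by positivity
      have := mul_le_mul_of_nonneg_left hsb h1n
      rw [hc]
      linarith [this]
    have hsq : Real.sqrt R' * Real.sqrt R' = R' := Real.mul_self_sqrt hR'pos.le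
    have hcs : c < Real.sqrt R' := by
      have := Real.sqrt_lt_sqrt (sq_nonneg c) hR'c
      rwa [Real.sqrt_sq hcnn] at this
    have hsp : 0 < Real.sqrt R' := Real.sqrt_pos.mpr hR'pos
    have hlt2 : c * Real.sqrt R' < Real.sqrt R' * Real.sqrt R' :=
      mul_lt_mul_of_pos_right hcs hsp
    linarith
  -- IVT
  have hcont : Continuous (fSigma n ω k σ) := by
    unfold fSigma
    apply Continuous.add
    · exact continuous_neg
    · apply Continuous.mul continuous_const
      apply continuous_finset_sum
      intro μ _
      exact Continuous.mul continuous_const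
        (Real.continuous_sqrt.comp ((continuous_const.mul continuous_id).sub continuous_const))
  have hiv := intermediate_value_Icc' hRR' hcont.continuousOn
  have h0mem : (0:ℝ) ∈ Set.Icc (fSigma n ω k σ R') (fSigma n ω k σ R) := ⟨hneg.le, hge⟩
  obtain ⟨R'', hR''mem, hR''z⟩ := hiv h0mem
  apply hno
  refine ⟨R'', lt_of_lt_of_le hR0 hR''mem.1, fun μ => ?_, hR''z⟩
  calc (ω μ)^2 ≤ (k μ)^2 * R := hdom μ
    _ ≤ (k μ)^2 * R'' := mul_le_mul_of_nonneg_left hR''mem.1 (sq_nonneg _)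
end

section
/- Suppose ω ∈ ℝ^n and k ∈ ℝ_{>0}^n satisfy IC1, IC2, IC3, and IC4. Let σ ∈ {−1,+1}^n have at least two entries equal to −1 and suppose f_σ has no positive roots. Let ℓ be the position of the second-to-last entry of σ equal to −1, and write σ = (ρ_1, ρ_2) where ρ_1 = (σ_1,…,σ_{ℓ−1}, −1) ∈ {−1,+1}^ℓ and ρ_2 = (σ_{ℓ+1},…,σ_n) ∈ {−1,+1}^{n−ℓ}. Then for every ρ_2' ∈ {−1,+1}^{n−ℓ} with N(ρ_2') < N(ρ_2), the sign pattern σ' = (ρ_1, ρ_2') satisfies that f_{σ'} has no positive roots. -/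
open scoped Classical

/-- The binary number associated with the tail `(σ_{ℓ+1},…,σ_n)` of a sign pattern
`σ ∈ {-1,+1}^n`: the `μ`-th binary digit is `1` if `σ μ = +1` and `0` if
`σ μ = -1`.  (The weights `2^(n-1-μ)` are those of the binary representation of
the full pattern, so comparing these numbers compares the tails `ρ₂`.) -/
noncomputable def signNumTail (n : ℕ) (ℓ : Fin n) (σ : Fin n → ℝ) : ℕ :=
  ∑ μ ∈ Finset.univ.filter (fun μ : Fin n => ℓ < μ),
    if σ μ = 1 then 2 ^ (n - 1 - (μ : ℕ)) else 0

lemma sum_range_two_pow_lt (N : ℕ) : ∑ i ∈ Finset.range N, 2 ^ i < 2 ^ N := by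
  induction N with
  | zero => simp
  | succ N ih => rw [Finset.sum_range_succ, pow_succ]; omega

lemma tail_pow_sum_lt (n : ℕ) (j : Fin n) :
    ∑ μ ∈ Finset.univ.filter (fun μ : Fin n => j < μ), 2 ^ (n - 1 - (μ : ℕ))
      < 2 ^ (n - 1 - (j : ℕ)) := by
  have hinj : ∀ a ∈ Finset.univ.filter (fun μ : Fin n => j < μ),
      ∀ b ∈ Finset.univ.filter (fun μ : Fin n => j < μ),
      n - 1 - (a : ℕ) = n - 1 - (b : ℕ) → a = b := by
    intro a _ b _ hab
    have ha := a.isLt; have hb := b.isLt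
    exact Fin.ext (by omega)
  calc ∑ μ ∈ Finset.univ.filter (fun μ : Fin n => j < μ), 2 ^ (n - 1 - (μ : ℕ))
      = ∑ i ∈ (Finset.univ.filter (fun μ : Fin n => j < μ)).image
          (fun μ : Fin n => n - 1 - (μ : ℕ)), 2 ^ i := (Finset.sum_image hinj).symm
    _ ≤ ∑ i ∈ Finset.range (n - 1 - (j : ℕ)), 2 ^ i := by
        apply Finset.sum_le_sum_of_subset
        intro i hi
        simp only [Finset.mem_image, Finset.mem_filter, Finset.mem_univ, true_and] at hi
        obtain ⟨μ, hjμ, rfl⟩ := hi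
        have h1 := μ.isLt
        have h2 : (j : ℕ) < (μ : ℕ) := hjμ
        simp only [Finset.mem_range]
        omega
    _ < 2 ^ (n - 1 - (j : ℕ)) := sum_range_two_pow_lt _

lemma binary_lt (n : ℕ) (ℓ j : Fin n) (σ σ' : Fin n → ℝ)
    (hℓj : ℓ < j)
    (hagree : ∀ μ : Fin n, μ < j → σ' μ = σ μ)
    (hj' : σ' j = 1) (hj : σ j ≠ 1) :
    signNumTail n ℓ σ < signNumTail n ℓ σ' := by
  classical
  have hsplit : ∀ τ : Fin n → ℝ,
      signNumTail n ℓ τ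
      = (∑ μ ∈ Finset.univ.filter (fun μ : Fin n => ℓ < μ ∧ μ < j),
          if τ μ = 1 then 2 ^ (n - 1 - (μ : ℕ)) else 0)
      + ∑ μ ∈ Finset.univ.filter (fun μ : Fin n => j ≤ μ),
          if τ μ = 1 then 2 ^ (n - 1 - (μ : ℕ)) else 0 := by
    intro τ
    unfold signNumTail
    rw [← Finset.sum_union]
    · apply Finset.sum_congr _ (fun _ _ => rfl)
      ext μ
      simp only [Finset.mem_filter, Finset.mem_union, Finset.mem_univ, true_and]
      constructor
      · intro h
        rcases lt_or_ge μ j with h2 | h2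
        · exact Or.inl ⟨h, h2⟩
        · exact Or.inr h2
      · rintro (⟨h, _⟩ | h)
        · exact h
        · exact lt_of_lt_of_le hℓj h
    · rw [Finset.disjoint_left]
      rintro μ hμ hμ'
      simp only [Finset.mem_filter, Finset.mem_univ, true_and] at hμ hμ'
      exact absurd hμ' (not_le.2 hμ.2)
  rw [hsplit σ, hsplit σ']
  have hA : (∑ μ ∈ Finset.univ.filter (fun μ : Fin n => ℓ < μ ∧ μ < j),
      if σ μ = 1 then 2 ^ (n - 1 - (μ : ℕ)) else 0)
      = ∑ μ ∈ Finset.univ.filter (fun μ : Fin n => ℓ < μ ∧ μ < j),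
      if σ' μ = 1 then 2 ^ (n - 1 - (μ : ℕ)) else 0 := by
    apply Finset.sum_congr rfl
    intro μ hμ
    simp only [Finset.mem_filter, Finset.mem_univ, true_and] at hμ
    rw [hagree μ hμ.2]
  rw [hA]
  have hins : Finset.univ.filter (fun μ : Fin n => j ≤ μ)
      = insert j (Finset.univ.filter (fun μ : Fin n => j < μ)) := by
    ext μ
    simp only [Finset.mem_filter, Finset.mem_insert, Finset.mem_univ, true_and]
    constructor
    · intro h
      rcases eq_or_lt_of_le h with h2 | h2
      · exact Or.inl h2.symm
      · exact Or.inr h2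
    · rintro (rfl | h)
      · exact le_refl _
      · exact h.le
  have hnotmem : j ∉ Finset.univ.filter (fun μ : Fin n => j < μ) := by
    simp
  have hB1 : (∑ μ ∈ Finset.univ.filter (fun μ : Fin n => j ≤ μ),
      if σ μ = 1 then 2 ^ (n - 1 - (μ : ℕ)) else 0) < 2 ^ (n - 1 - (j : ℕ)) := by
    rw [hins, Finset.sum_insert hnotmem, if_neg hj, zero_add]
    calc (∑ μ ∈ Finset.univ.filter (fun μ : Fin n => j < μ),
        if σ μ = 1 then 2 ^ (n - 1 - (μ : ℕ)) else 0)
        ≤ ∑ μ ∈ Finset.univ.filter (fun μ : Fin n => j < μ), 2 ^ (n - 1 - (μ : ℕ)) := by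
          apply Finset.sum_le_sum
          intro μ _
          split
          · exact le_refl _
          · exact Nat.zero_le _
      _ < 2 ^ (n - 1 - (j : ℕ)) := tail_pow_sum_lt n j
  have hB2 : 2 ^ (n - 1 - (j : ℕ)) ≤ ∑ μ ∈ Finset.univ.filter (fun μ : Fin n => j ≤ μ),
      if σ' μ = 1 then 2 ^ (n - 1 - (μ : ℕ)) else 0 := by
    have hjmem : j ∈ Finset.univ.filter (fun μ : Fin n => j ≤ μ) := by simp
    have := Finset.single_le_sum (f := fun μ : Fin n =>
      if σ' μ = 1 then 2 ^ (n - 1 - (μ : ℕ)) else 0)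
      (fun μ _ => Nat.zero_le _) hjmem
    simpa [hj'] using this
  omega

lemma sqrt_anti (n : ℕ) (ω k : Fin n → ℝ) (hk : ∀ μ, 0 < k μ)
    (hord : ∀ μ ν : Fin n, μ ≤ ν → |ω μ / k μ| ≤ |ω ν / k ν|)
    (hk4 : ∀ μ ν : Fin n, μ ≤ ν → k ν ≤ k μ)
    (R : ℝ) (hdom : ∀ μ, (ω μ) ^ 2 ≤ (k μ) ^ 2 * R)
    (μ ν : Fin n) (hμν : μ ≤ ν) :
    Real.sqrt ((k ν) ^ 2 * R - (ω ν) ^ 2) ≤ Real.sqrt ((k μ) ^ 2 * R - (ω μ) ^ 2) := by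
  apply Real.sqrt_le_sqrt
  have hkμ := hk μ; have hkν := hk ν
  have h1 : |ω μ / k μ| ≤ |ω ν / k ν| := hord μ ν hμν
  have h2 : (ω μ / k μ) ^ 2 ≤ (ω ν / k ν) ^ 2 := by
    rw [← sq_abs (ω μ / k μ), ← sq_abs (ω ν / k ν)]
    exact pow_le_pow_left₀ (abs_nonneg _) h1 2
  have h3 : (ω μ) ^ 2 * (k ν) ^ 2 ≤ (ω ν) ^ 2 * (k μ) ^ 2 := by
    rw [div_pow, div_pow, div_le_div_iff₀ (by positivity) (by positivity)] at h2
    linarith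
  have h4 := hdom ν
  have h5 : k ν ≤ k μ := hk4 μ ν hμν
  have h6 : (k ν) ^ 2 ≤ (k μ) ^ 2 := pow_le_pow_left₀ hkν.le h5 2
  have h7 : 0 < (k ν) ^ 2 := by positivity
  nlinarith [mul_nonneg (sub_nonneg.2 h6) (sub_nonneg.2 h4)]

lemma fSigma_continuous (n : ℕ) (ω k σ : Fin n → ℝ) : Continuous (fSigma n ω k σ) := by
  unfold fSigma
  apply Continuous.add
  · exact continuous_neg
  · apply Continuous.mul continuous_const
    apply continuous_finset_sum
    intro μ _
    exact Continuous.mul continuous_const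
      (Real.continuous_sqrt.comp ((continuous_const.mul continuous_id).sub continuous_const))

lemma fSigma_neg_on_domain (n : ℕ) (ω k σ : Fin n → ℝ)
    (hk : ∀ μ, 0 < k μ) (hσ1 : ∀ μ, σ μ ≤ 1)
    (hno : ¬ ∃ R : ℝ, IsPosRoot n ω k σ R) :
    ∀ R : ℝ, 0 < R → (∀ μ, (ω μ) ^ 2 ≤ (k μ) ^ 2 * R) → fSigma n ω k σ R < 0 := by
  intro R₁ hR₁ hdom
  by_contra hcon
  push_neg at hcon
  set C : ℝ := (1 / (n : ℝ)) * ∑ μ, k μ with hCdef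
  have hC : 0 ≤ C := by
    apply mul_nonneg (by positivity)
    exact Finset.sum_nonneg fun μ _ => (hk μ).le
  set R₂ : ℝ := max R₁ ((C + 1) ^ 2) with hR₂def
  have hR₁₂ : R₁ ≤ R₂ := le_max_left _ _
  have hR₂pos : 0 < R₂ := lt_of_lt_of_le hR₁ hR₁₂
  have hsqrtR₂ : C + 1 ≤ Real.sqrt R₂ := by
    have h := Real.sqrt_le_sqrt (le_max_right R₁ ((C + 1) ^ 2))
    rwa [Real.sqrt_sq (by linarith)] at h
  have hf2 : fSigma n ω k σ R₂ < 0 := by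
    have hterm : ∀ μ : Fin n,
        σ μ * Real.sqrt ((k μ) ^ 2 * R₂ - (ω μ) ^ 2) ≤ k μ * Real.sqrt R₂ := by
      intro μ
      have h1 : σ μ * Real.sqrt ((k μ) ^ 2 * R₂ - (ω μ) ^ 2)
          ≤ 1 * Real.sqrt ((k μ) ^ 2 * R₂ - (ω μ) ^ 2) :=
        mul_le_mul_of_nonneg_right (hσ1 μ) (Real.sqrt_nonneg _)
      have h2 : Real.sqrt ((k μ) ^ 2 * R₂ - (ω μ) ^ 2) ≤ Real.sqrt ((k μ) ^ 2 * R₂) :=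
        Real.sqrt_le_sqrt (by nlinarith [sq_nonneg (ω μ)])
      have h3 : Real.sqrt ((k μ) ^ 2 * R₂) = k μ * Real.sqrt R₂ := by
        rw [Real.sqrt_mul (sq_nonneg _), Real.sqrt_sq (hk μ).le]
      linarith
    have hsum : ∑ μ, σ μ * Real.sqrt ((k μ) ^ 2 * R₂ - (ω μ) ^ 2)
        ≤ (∑ μ, k μ) * Real.sqrt R₂ := by
      rw [Finset.sum_mul]
      exact Finset.sum_le_sum fun μ _ => hterm μ
    have hn0 : (0 : ℝ) ≤ 1 / (n : ℝ) := by positivity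
    have hmain : (1 / (n : ℝ)) * ∑ μ, σ μ * Real.sqrt ((k μ) ^ 2 * R₂ - (ω μ) ^ 2)
        ≤ C * Real.sqrt R₂ := by
      rw [hCdef, mul_assoc]
      exact mul_le_mul_of_nonneg_left hsum hn0
    have hlt : C * Real.sqrt R₂ < R₂ := by
      have hs : 0 < Real.sqrt R₂ := Real.sqrt_pos.2 hR₂pos
      have h := mul_lt_mul_of_pos_right (show C < Real.sqrt R₂ by linarith) hs
      rwa [Real.mul_self_sqrt hR₂pos.le] at h
    unfold fSigma
    linarith
  have hcont : ContinuousOn (fSigma n ω k σ) (Set.Icc R₁ R₂) :=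
    (fSigma_continuous n ω k σ).continuousOn
  have h0mem : (0 : ℝ) ∈ Set.Icc (fSigma n ω k σ R₂) (fSigma n ω k σ R₁) := ⟨hf2.le, hcon⟩
  obtain ⟨R, hRmem, hfR⟩ := intermediate_value_Icc' hR₁₂ hcont h0mem
  exact hno ⟨R, lt_of_lt_of_le hR₁ hRmem.1,
    fun μ => le_trans (hdom μ) (mul_le_mul_of_nonneg_left hRmem.1 (sq_nonneg _)), hfR⟩

/-- Theorem 2.7, case 3: under IC1–IC4, suppose `σ` has at least two
entries equal to `-1`, `f_σ` has no positive roots, and `ℓ` is the position of the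
second-to-last entry of `σ` equal to `-1` (i.e. `σ ℓ = -1` and there is exactly one
position after `ℓ` where `σ` is `-1`).  Write `σ = (ρ₁, ρ₂)` with
`ρ₁ = (σ_1,…,σ_{ℓ-1},-1)`.  Then every sign pattern `σ' = (ρ₁, ρ₂')` whose tail
`ρ₂'` is smaller than `ρ₂` in the binary representation satisfies: `f_{σ'}` has no
positive roots. -/
theorem no_posRoot_of_smaller_tail (n : ℕ) (hn : 2 ≤ n) (ω k σ : Fin n → ℝ)
    (hIC1 : ∑ μ, ω μ = 0) (hIC2 : ω ≠ 0)
    (hIC3pos : ∀ μ, 0 < k μ)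
    (hIC3ord : ∀ μ ν : Fin n, μ ≤ ν → |ω μ / k μ| ≤ |ω ν / k ν|)
    (hIC4 : ∀ μ ν : Fin n, μ ≤ ν → k ν ≤ k μ)
    (hσ : ∀ μ, σ μ = -1 ∨ σ μ = 1)
    (ℓ : Fin n) (hℓ : σ ℓ = -1)
    (hpenult : ∃! μ : Fin n, ℓ < μ ∧ σ μ = -1)
    (hno : ¬ ∃ R : ℝ, IsPosRoot n ω k σ R) :
    ∀ σ' : Fin n → ℝ, (∀ μ, σ' μ = -1 ∨ σ' μ = 1) →
      (∀ μ : Fin n, μ ≤ ℓ → σ' μ = σ μ) →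
      signNumTail n ℓ σ' < signNumTail n ℓ σ →
      ¬ ∃ R : ℝ, IsPosRoot n ω k σ' R := by
  classical
  intro σ' hσ' hagree hlt hroot'
  obtain ⟨R, hRpos, hdom, hfR⟩ := hroot'
  obtain ⟨m, ⟨hℓm, hσm⟩, hmuniq⟩ := hpenult
  set T := Finset.univ.filter (fun μ : Fin n => σ' μ ≠ σ μ) with hT
  have hTne : T.Nonempty := by
    by_contra h
    rw [Finset.not_nonempty_iff_eq_empty, Finset.filter_eq_empty_iff] at h
    have heq : σ' = σ := funext fun μ => not_not.1 (h (Finset.mem_univ μ))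
    rw [heq] at hlt
    exact lt_irrefl _ hlt
  set j := T.min' hTne with hj
  have hjT : σ' j ≠ σ j := by
    simpa [hT] using (Finset.mem_filter.1 (T.min'_mem hTne)).2
  have hjmin : ∀ μ : Fin n, μ < j → σ' μ = σ μ := by
    intro μ hμ
    by_contra hne
    have hle : j ≤ μ := T.min'_le μ (by simp [hT, hne])
    exact absurd hμ (not_lt.2 hle)
  have hℓj : ℓ < j := by
    by_contra h
    exact hjT (hagree j (not_lt.1 h))
  have hσj : σ j = 1 := by
    rcases hσ j with h | h
    · rcases hσ' j with h' | h'
      · exact absurd (h'.trans h.symm) hjT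
      · exfalso
        have := binary_lt n ℓ j σ σ' hℓj hjmin h' (by rw [h]; norm_num)
        omega
    · exact h
  have hσ'j : σ' j = -1 := by
    rcases hσ' j with h | h
    · exact h
    · exact absurd (h.trans hσj.symm) hjT
  have hjm : j ≠ m := by
    intro h
    rw [h, hσm] at hσj
    norm_num at hσj
  set a : Fin n → ℝ := fun μ => Real.sqrt ((k μ) ^ 2 * R - (ω μ) ^ 2) with ha
  have hanneg : ∀ μ, 0 ≤ a μ := fun μ => Real.sqrt_nonneg _
  have hamono : ∀ μ ν : Fin n, μ ≤ ν → a ν ≤ a μ := fun μ ν h =>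
    sqrt_anti n ω k hIC3pos hIC3ord hIC4 R hdom μ ν h
  have hσ'le : ∀ μ, σ' μ ≤ 1 := by
    intro μ; rcases hσ' μ with h | h <;> rw [h] <;> norm_num
  have hkey : ∀ μ : Fin n,
      ((if μ = j then 2 * a j else 0) + (if μ = m then -(2 * a j) else 0))
      ≤ (σ μ - σ' μ) * a μ := by
    intro μ
    by_cases h1 : μ = j
    · subst h1
      rw [if_pos rfl, if_neg hjm, hσj, hσ'j]
      ring_nf
      linarith [hanneg j]
    · rw [if_neg h1]
      by_cases h2 : μ = m
      · subst h2
        rw [if_pos rfl]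
        rcases lt_trichotomy μ j with h3 | h3 | h3
        · rw [hjmin μ h3]
          simp only [sub_self, zero_mul, zero_add]
          linarith [hanneg j]
        · exact absurd h3 h1
        · have h4 : a μ ≤ a j := hamono j μ h3.le
          have h5 := hσ'le μ
          rw [hσm, zero_add]
          nlinarith [hanneg μ, mul_nonneg (show (0:ℝ) ≤ 1 - σ' μ by linarith) (hanneg μ)]
      · rw [if_neg h2, add_zero]
        rcases lt_trichotomy μ j with h3 | h3 | h3
        · rw [hjmin μ h3]
          simp
        · exact absurd h3 h1
        · have hℓμ : ℓ < μ := lt_trans hℓj h3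
          have hσμ : σ μ = 1 := by
            rcases hσ μ with h | h
            · exact absurd (hmuniq μ ⟨hℓμ, h⟩) h2
            · exact h
          rw [hσμ]
          exact mul_nonneg (by linarith [hσ'le μ]) (hanneg μ)
  have hcsum : ∑ μ : Fin n,
      ((if μ = j then 2 * a j else 0) + (if μ = m then -(2 * a j) else 0)) = 0 := by
    rw [Finset.sum_add_distrib, Finset.sum_ite_eq' Finset.univ j,
      Finset.sum_ite_eq' Finset.univ m]
    simp
  have hsum : ∑ μ, σ' μ * a μ ≤ ∑ μ, σ μ * a μ := by
    have h := Finset.sum_le_sum (fun μ (_ : μ ∈ Finset.univ) => hkey μ)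
    rw [hcsum] at h
    have h2 : ∑ μ : Fin n, (σ μ - σ' μ) * a μ
        = ∑ μ, σ μ * a μ - ∑ μ, σ' μ * a μ := by
      rw [← Finset.sum_sub_distrib]
      exact Finset.sum_congr rfl fun μ _ => by ring
    rw [h2] at h
    linarith
  have hσle : ∀ μ, σ μ ≤ 1 := by
    intro μ; rcases hσ μ with h | h <;> rw [h] <;> norm_num
  have hneg := fSigma_neg_on_domain n ω k σ hIC3pos hσle hno R hRpos hdom
  have hle : fSigma n ω k σ' R ≤ fSigma n ω k σ R := by
    unfold fSigma
    have hn0 : (0 : ℝ) ≤ 1 / (n : ℝ) := by positivity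
    have := mul_le_mul_of_nonneg_left hsum hn0
    linarith
  rw [hfR] at hle
  linarith
end

section
/- Let n ≥ 2 be even and let q > 0 be a real number that is not an integer. Set ω_μ = nq for μ = 1,…,n/2, ω_μ = −nq for μ = n/2+1,…,n, and k = (n, n, …, n). Then the number of equilibria in Θ_{ω,k}, i.e., θ ∈ (−π,π]^n satisfying the equilibrium equations and OC1, is exactly 2^n − Σ_{ℓ ∈ ℤ, −q < ℓ < q} C(n, n/2 + ℓ), where C(a,b) denotes the binomial coefficient. -/
open scoped Classical

/-- `Θ_{ω,k}`: the set of equilibria of the rank-one coupled Kuramoto model lying in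
`(-π,π]^n` and satisfying the output condition OC1. -/
def kuramotoEquilibria (n : ℕ) (ω k : Fin n → ℝ) : Set (Fin n → ℝ) :=
  {θ | (∀ ν, θ ν ∈ Set.Ioc (-Real.pi) Real.pi) ∧
    (∀ ν, ω ν = (1 / (n : ℝ)) * ∑ μ, k ν * k μ * Real.sin (θ ν - θ μ)) ∧
    (∑ μ, k μ * Real.sin (θ μ) = 0 ∧ 0 ≤ ∑ μ, k μ * Real.cos (θ μ))}

/-! With equal couplings `n`, OC1 turns the equilibrium equations into `sin θ_ν · C = ±q`,
where `C = ∑ cos θ_μ > 0`. So every `sin θ_ν` is `±sin φ` for one `φ ∈ (0, π/2]`, and every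
`cos θ_ν` is `±cos φ`; if `T` is the set of indices with positive cosine, then
`C = (2|T| - n) cos φ` and the equations reduce to `(2|T| - n) sin 2φ = 2q`. For fixed `T` this has
two solutions `2φ ∈ (0, π)` when `2|T| - n > 2q` and none otherwise (equality would make `q` an
integer). Hence `|Θ| = 2 ∑_{j - n/2 > q} C(n, j)`, and the reflection `j ↦ n - j` turns this into
`2^n - ∑_{|j - n/2| < q} C(n, j)`. -/

open Real Set

theorem Real.eq_of_sin_eq_of_cos_eq {x y : ℝ} (hx : x ∈ Ioc (-π) π) (hy : y ∈ Ioc (-π) π)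
    (hs : sin x = sin y) (hc : cos x = cos y) : x = y := by
  rw [← Complex.arg_cos_add_sin_mul_I hx, ← Complex.arg_cos_add_sin_mul_I hy]
  push_cast [← Complex.ofReal_cos, ← Complex.ofReal_sin, hs, hc]
  rfl

theorem Real.setOf_sin_eq_Ioo {a : ℝ} (ha : a ∈ Ioo 0 1) :
    {x ∈ Ioo 0 π | sin x = a} = {arcsin a, π - arcsin a} := by
  have h0 : 0 < arcsin a := arcsin_pos.2 ha.1
  have h1 : arcsin a < π / 2 := arcsin_lt_pi_div_two.2 ha.2
  have hsin : sin (arcsin a) = a := sin_arcsin (by linarith [ha.1]) ha.2.le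
  ext x
  simp only [mem_ofPred_eq, mem_insert_iff, mem_singleton_iff, mem_Ioo]
  constructor
  · rintro ⟨⟨hx0, hxπ⟩, rfl⟩
    rcases le_total x (π / 2) with hx | hx
    · exact .inl (arcsin_sin (by linarith) hx).symm
    · right
      rw [← sin_pi_sub, arcsin_sin (by linarith) (by linarith)]
      ring
  · rintro (rfl | rfl)
    · exact ⟨⟨h0, by linarith⟩, hsin⟩
    · exact ⟨⟨by linarith, by linarith⟩, by rw [sin_pi_sub, hsin]⟩

theorem Real.setOf_mul_sin_eq {M b : ℝ} (hb : 0 < b) (hMb : M ≠ b) :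
    {x ∈ Ioo 0 π | M * sin x = b} =
      if b < M then {arcsin (b / M), π - arcsin (b / M)} else ∅ := by
  split_ifs with h
  · have hM : 0 < M := hb.trans h
    rw [← setOf_sin_eq_Ioo ⟨div_pos hb hM, (div_lt_one hM).2 h⟩]
    simp only [eq_div_iff hM.ne', mul_comm M]
  · refine eq_empty_of_forall_notMem fun x ⟨hx, hMx⟩ => ?_
    have := sin_pos_of_pos_of_lt_pi hx.1 hx.2
    have := sin_le_one x
    rcases le_total M 0 with h0 | h0 <;> nlinarith [lt_of_le_of_ne (not_lt.1 h) hMb]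

theorem Real.ncard_setOf_mul_sin_eq {M b : ℝ} (hb : 0 < b) (hMb : M ≠ b) :
    {x ∈ Ioo 0 π | M * sin x = b}.ncard = if b < M then 2 else 0 := by
  rw [setOf_mul_sin_eq hb hMb]
  split_ifs with h
  · exact ncard_pair (by linarith [arcsin_lt_pi_div_two.2 ((div_lt_one (hb.trans h)).2 h)])
  · exact ncard_empty ℝ

theorem Real.finite_setOf_mul_sin_eq {M b : ℝ} (hb : 0 < b) (hMb : M ≠ b) :
    {x ∈ Ioo 0 π | M * sin x = b}.Finite := by
  rw [setOf_mul_sin_eq hb hMb]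
  split_ifs <;> exact toFinite _

theorem Real.cos_eq_ite_of_sin_sq_eq {x φ : ℝ} (h : sin x ^ 2 = sin φ ^ 2) (hφ : 0 ≤ cos φ) :
    cos x = if 0 < cos x then cos φ else -cos φ := by
  have habs : |cos x| = cos φ := by
    rw [← abs_of_nonneg hφ, ← sq_eq_sq_iff_abs_eq_abs, cos_sq', cos_sq', h]
  split_ifs with hx
  · rwa [abs_of_pos hx] at habs
  · rw [← habs, abs_of_nonpos (not_lt.1 hx), neg_neg]

theorem Finset.sum_ite_mem_neg {ι : Type*} [Fintype ι] [DecidableEq ι] (T : Finset ι) (a : ℝ) :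
    ∑ ν, (if ν ∈ T then a else -a) = (2 * T.card - Fintype.card ι) * a := by
  have h : ∀ ν, (if ν ∈ T then a else -a) = (if ν ∈ T then 2 * a else 0) - a := by
    intro ν; split_ifs <;> ring
  simp only [h, Finset.sum_sub_distrib, Finset.sum_ite_mem, Finset.univ_inter,
    Finset.sum_const, Finset.card_univ, nsmul_eq_mul]
  ring

theorem Fin.sum_ite_lt_half_neg {n : ℕ} (heven : Even n) (a : ℝ) :
    ∑ ν : Fin n, (if (ν : ℕ) < n / 2 then a else -a) = 0 := by
  have h := Finset.sum_ite_mem_neg (Finset.univ.filter fun ν : Fin n => (ν : ℕ) < n / 2) a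
  simp only [Finset.mem_filter, Finset.mem_univ, true_and, Fin.card_filter_val_lt,
    Fintype.card_fin] at h
  rw [h, min_eq_right (Nat.div_le_self n 2)]
  obtain ⟨m, rfl⟩ := heven
  rw [← two_mul, Nat.mul_div_cancel_left m two_pos]
  push_cast
  ring

theorem Real.sum_sin_sub {ι : Type*} [Fintype ι] (θ : ι → ℝ) (x : ℝ) :
    ∑ μ, sin (x - θ μ) = sin x * ∑ μ, cos (θ μ) - cos x * ∑ μ, sin (θ μ) := by
  simp only [sin_sub, Finset.sum_sub_distrib, Finset.mul_sum]

theorem mem_kuramotoEquilibria_const_iff {n : ℕ} {ω θ : Fin n → ℝ} {κ : ℝ} (hκ : 0 < κ) :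
    θ ∈ kuramotoEquilibria n ω (fun _ => κ) ↔
      (∀ ν, θ ν ∈ Ioc (-π) π) ∧ (∀ ν, ω ν = κ ^ 2 / n * sin (θ ν) * ∑ μ, cos (θ μ)) ∧
        ∑ μ, sin (θ μ) = 0 ∧ 0 ≤ ∑ μ, cos (θ μ) := by
  have hcoupling : ∀ ν, 1 / (n : ℝ) * ∑ μ, κ * κ * sin (θ ν - θ μ) =
      κ ^ 2 / n * (sin (θ ν) * ∑ μ, cos (θ μ) - cos (θ ν) * ∑ μ, sin (θ μ)) := by
    intro ν
    rw [← Finset.mul_sum, Real.sum_sin_sub]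
    ring
  have hOC1 : (∑ μ, κ * sin (θ μ) = 0 ↔ ∑ μ, sin (θ μ) = 0) ∧
      (0 ≤ ∑ μ, κ * cos (θ μ) ↔ 0 ≤ ∑ μ, cos (θ μ)) := by
    simp only [← Finset.mul_sum, mul_eq_zero, hκ.ne', false_or, mul_nonneg_iff_of_pos_left hκ,
      and_self]
  simp only [kuramotoEquilibria, mem_ofPred_eq, hcoupling, hOC1]
  constructor <;> rintro ⟨hrange, hω, hsin, hcos⟩ <;>
    exact ⟨hrange, fun ν => by simpa [hsin, mul_assoc] using hω ν, hsin, hcos⟩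

theorem ite_lt_add_ite_lt_neg_add_ite_abs_lt {x q : ℝ} (hq : 0 < q) (hxq : x ≠ q)
    (hxq' : x ≠ -q) (c : ℕ) :
    (if q < x then c else 0) + (if x < -q then c else 0) + (if |x| < q then c else 0) = c := by
  rcases lt_trichotomy x (-q) with h | rfl | h
  · have h' : x < q := h.trans (neg_lt_self hq)
    simp [abs_lt, h, h', not_lt.2 h'.le, not_lt.2 h.le]
  · exact absurd rfl hxq'
  · rcases lt_trichotomy x q with h' | rfl | h'
    · simp [abs_lt, h, h', not_lt.2 h'.le, not_lt.2 h.le]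
    · exact absurd rfl hxq
    · simp [abs_lt, h', not_lt.2 h.le, not_lt.2 h'.le]

theorem two_mul_sum_choose_gt_add_sum_choose_abs_lt (n : ℕ) {q : ℝ} (hq : 0 < q)
    (hnq : ∀ j : ℕ, (j : ℝ) - n / 2 ≠ q) :
    2 * ∑ j ∈ Finset.range (n + 1), (if q < (j : ℝ) - n / 2 then n.choose j else 0) +
      ∑ j ∈ Finset.range (n + 1), (if |(j : ℝ) - n / 2| < q then n.choose j else 0) = 2 ^ n := by
  have hreflect : ∑ j ∈ Finset.range (n + 1), (if q < (j : ℝ) - n / 2 then n.choose j else 0) =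
      ∑ j ∈ Finset.range (n + 1), (if (j : ℝ) - n / 2 < -q then n.choose j else 0) := by
    rw [← Finset.sum_range_reflect]
    refine Finset.sum_congr rfl fun j hj => ?_
    have hjn : j ≤ n := Nat.lt_succ_iff.1 (Finset.mem_range.1 hj)
    rw [Nat.add_sub_cancel, Nat.cast_sub hjn, Nat.choose_symm hjn]
    exact if_congr ⟨fun h => by linarith, fun h => by linarith⟩ rfl rfl
  have hnq' : ∀ j ∈ Finset.range (n + 1), (j : ℝ) - n / 2 ≠ -q := fun j hj h => by
    have hjn : j ≤ n := Nat.lt_succ_iff.1 (Finset.mem_range.1 hj)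
    exact hnq (n - j) (by rw [Nat.cast_sub hjn]; linarith)
  rw [two_mul]
  nth_rewrite 2 [hreflect]
  rw [← Finset.sum_add_distrib, ← Finset.sum_add_distrib, ← Nat.sum_range_choose n]
  exact Finset.sum_congr rfl fun j hj =>
    ite_lt_add_ite_lt_neg_add_ite_abs_lt hq (hnq j) (hnq' j hj) _

section HalfSplit

variable {n : ℕ} {q : ℝ}

def halfSplitFrequencies (n : ℕ) (q : ℝ) : Fin n → ℝ :=
  fun μ => if (μ : ℕ) < n / 2 then (n : ℝ) * q else -((n : ℝ) * q)

theorem mem_kuramotoEquilibria_halfSplit_iff (hn : n ≠ 0) {θ : Fin n → ℝ} :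
    θ ∈ kuramotoEquilibria n (halfSplitFrequencies n q) (fun _ => (n : ℝ)) ↔
      (∀ ν, θ ν ∈ Ioc (-π) π) ∧
        (∀ ν : Fin n, sin (θ ν) * ∑ μ, cos (θ μ) = if (ν : ℕ) < n / 2 then q else -q) ∧
        ∑ μ, sin (θ μ) = 0 ∧ 0 ≤ ∑ μ, cos (θ μ) := by
  have hn' : (n : ℝ) ≠ 0 := Nat.cast_ne_zero.2 hn
  have hω : ∀ ν y, halfSplitFrequencies n q ν = (n : ℝ) ^ 2 / n * y ↔
      y = if (ν : ℕ) < n / 2 then q else -q := by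
    intro ν y
    rw [sq, mul_div_cancel_right₀ _ hn', halfSplitFrequencies, eq_comm]
    split_ifs <;> simp [← mul_neg, mul_right_inj' hn']
  rw [mem_kuramotoEquilibria_const_iff (Nat.cast_pos.2 (Nat.pos_of_ne_zero hn))]
  simp only [mul_assoc, hω]

noncomputable def clusterAngles (n : ℕ) (T : Finset (Fin n)) (φ : ℝ) : Fin n → ℝ :=
  fun ν => if (ν : ℕ) < n / 2 then (if ν ∈ T then φ else π - φ)
    else -(if ν ∈ T then φ else π - φ)

variable {T : Finset (Fin n)} {φ : ℝ}

theorem sin_clusterAngles (ν : Fin n) :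
    sin (clusterAngles n T φ ν) = if (ν : ℕ) < n / 2 then sin φ else -sin φ := by
  unfold clusterAngles
  split_ifs <;> simp [sin_pi_sub]

theorem cos_clusterAngles (ν : Fin n) :
    cos (clusterAngles n T φ ν) = if ν ∈ T then cos φ else -cos φ := by
  unfold clusterAngles
  split_ifs <;> simp [cos_pi_sub]

theorem clusterAngles_mem_Ioc (hφ : φ ∈ Ioo 0 π) (ν : Fin n) :
    clusterAngles n T φ ν ∈ Ioc (-π) π := by
  obtain ⟨h0, hπ⟩ := hφ
  unfold clusterAngles
  split_ifs <;> constructor <;> linarith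

theorem sum_sin_clusterAngles (heven : Even n) : ∑ ν, sin (clusterAngles n T φ ν) = 0 := by
  simp only [sin_clusterAngles, Fin.sum_ite_lt_half_neg heven]

theorem sum_cos_clusterAngles : ∑ ν, cos (clusterAngles n T φ ν) = (2 * T.card - n) * cos φ := by
  simp only [cos_clusterAngles, Finset.sum_ite_mem_neg, Fintype.card_fin]

theorem clusterAngles_mem_kuramotoEquilibria (hn : n ≠ 0) (heven : Even n) (hq : 0 < q)
    {x : ℝ} (hx : x ∈ Ioo 0 π) (hT : (2 * T.card - n) * sin x = 2 * q) :
    clusterAngles n T (x / 2) ∈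
      kuramotoEquilibria n (halfSplitFrequencies n q) (fun _ => (n : ℝ)) := by
  have hsin2 : sin x = 2 * sin (x / 2) * cos (x / 2) := by
    rw [← sin_two_mul, mul_div_cancel₀ x two_ne_zero]
  have hM : 0 < (2 * T.card - n : ℝ) :=
    pos_of_mul_pos_left (hT ▸ by linarith) (sin_pos_of_pos_of_lt_pi hx.1 hx.2).le
  have hx2 : x / 2 ∈ Ioo 0 π := ⟨by linarith [hx.1], by linarith [hx.2, pi_pos]⟩
  have hcos : 0 ≤ cos (x / 2) :=
    cos_nonneg_of_mem_Icc ⟨by linarith [hx.1, pi_pos], by linarith [hx.2]⟩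
  refine (mem_kuramotoEquilibria_halfSplit_iff hn).2
    ⟨clusterAngles_mem_Ioc hx2, fun ν => ?_,
      sum_sin_clusterAngles heven, sum_cos_clusterAngles ▸ by positivity⟩
  rw [sum_cos_clusterAngles, sin_clusterAngles]
  rw [hsin2] at hT
  split_ifs
  · linear_combination hT / 2
  · linear_combination -hT / 2

theorem clusterAngles_injOn (hn : n ≠ 0) {T' : Finset (Fin n)} {φ' : ℝ}
    (hφ : φ ∈ Ioo 0 (π / 2)) (hφ' : φ' ∈ Ioo 0 (π / 2))
    (h : clusterAngles n T φ = clusterAngles n T' φ') : T = T' ∧ φ = φ' := by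
  obtain ⟨h0, h1⟩ := hφ
  obtain ⟨h0', h1'⟩ := hφ'
  have hT : T = T' := by
    ext ν
    have hν := congrFun h ν
    unfold clusterAngles at hν
    split_ifs at hν <;> first | linarith | tauto
  subst hT
  have hν := congrFun h ⟨0, Nat.pos_of_ne_zero hn⟩
  unfold clusterAngles at hν
  exact ⟨rfl, by split_ifs at hν <;> linarith⟩

theorem exists_eq_clusterAngles (hn : n ≠ 0) (hq : 0 < q) {θ : Fin n → ℝ}
    (hθ : θ ∈ kuramotoEquilibria n (halfSplitFrequencies n q) (fun _ => (n : ℝ))) :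
    ∃ T : Finset (Fin n), ∃ x ∈ Ioo 0 π,
      (2 * T.card - n) * sin x = 2 * q ∧ θ = clusterAngles n T (x / 2) := by
  obtain ⟨hrange, hω, -, hC⟩ := (mem_kuramotoEquilibria_halfSplit_iff hn).1 hθ
  set C := ∑ μ, cos (θ μ) with hC_def
  have ν₀ : Fin n := ⟨0, Nat.pos_of_ne_zero hn⟩
  have hCpos : 0 < C := hC.lt_of_ne fun h => by
    have := hω ν₀
    rw [← h, mul_zero] at this
    split_ifs at this <;> linarith
  have hsin : ∀ ν : Fin n, sin (θ ν) = if (ν : ℕ) < n / 2 then q / C else -(q / C) := by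
    intro ν
    have := hω ν
    split_ifs at this ⊢
    · rw [eq_div_iff hCpos.ne', this]
    · rw [← neg_div, eq_div_iff hCpos.ne', this]
  have hs : q / C ∈ Ioc 0 1 := by
    refine ⟨div_pos hq hCpos, ?_⟩
    have := hsin ν₀
    split_ifs at this <;> linarith [sin_le_one (θ ν₀), neg_one_le_sin (θ ν₀)]
  set φ := arcsin (q / C)
  have hsinφ : sin φ = q / C := sin_arcsin (by linarith [hs.1]) hs.2
  have hφ : φ ∈ Ioc 0 (π / 2) := ⟨arcsin_pos.2 hs.1, arcsin_le_pi_div_two _⟩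
  have hcosφ : 0 ≤ cos φ := cos_arcsin_nonneg _
  set T := Finset.univ.filter fun ν => 0 < cos (θ ν)
  have hθ_eq : θ = clusterAngles n T φ := by
    funext ν
    refine eq_of_sin_eq_of_cos_eq (hrange ν)
      (clusterAngles_mem_Ioc ⟨hφ.1, by linarith [hφ.2, pi_pos]⟩ ν) ?_ ?_
    · rw [hsin, sin_clusterAngles, hsinφ]
    · rw [cos_clusterAngles,
        cos_eq_ite_of_sin_sq_eq (by rw [hsin, hsinφ]; split_ifs <;> ring) hcosφ]
      simp only [T, Finset.mem_filter, Finset.mem_univ, true_and]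
  have hsol : (2 * T.card - n) * sin (2 * φ) = 2 * q := by
    have hCφ : C = (2 * T.card - n) * cos φ := by rw [hC_def, hθ_eq, sum_cos_clusterAngles]
    calc (2 * T.card - n) * sin (2 * φ) = 2 * (q / C) * ((2 * T.card - n) * cos φ) := by
          rw [sin_two_mul, hsinφ]; ring
      _ = 2 * q := by rw [← hCφ, mul_assoc, div_mul_cancel₀ q hCpos.ne']
  refine ⟨T, 2 * φ, ⟨by linarith [hφ.1], ?_⟩, hsol,
    by rw [hθ_eq, mul_div_cancel_left₀ φ two_ne_zero]⟩
  refine lt_of_le_of_ne (by linarith [hφ.2]) fun hπ => ?_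
  rw [hπ, sin_pi, mul_zero] at hsol
  linarith

theorem ncard_kuramotoEquilibria_halfSplit_eq_sum_ncard (hn : n ≠ 0) (heven : Even n)
    (hq : 0 < q) (hM : ∀ T : Finset (Fin n), (2 * T.card - n : ℝ) ≠ 2 * q) :
    (kuramotoEquilibria n (halfSplitFrequencies n q) (fun _ => (n : ℝ))).ncard =
      ∑ T : Finset (Fin n), {x ∈ Ioo 0 π | (2 * T.card - n) * sin x = 2 * q}.ncard := by
  set X : Finset (Fin n) → Set ℝ := fun T => {x ∈ Ioo 0 π | (2 * T.card - n) * sin x = 2 * q}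
  have : ∀ T, Finite (X T) := fun T =>
    (finite_setOf_mul_sin_eq (mul_pos two_pos hq) (hM T)).to_subtype
  let g : (Σ T, X T) → kuramotoEquilibria n (halfSplitFrequencies n q) (fun _ => (n : ℝ)) :=
    fun p => ⟨clusterAngles n p.1 (p.2 / 2),
      clusterAngles_mem_kuramotoEquilibria hn heven hq p.2.2.1 p.2.2.2⟩
  have hg : Function.Bijective g := by
    refine ⟨fun ⟨T, x, hx⟩ ⟨T', x', hx'⟩ h => ?_, fun ⟨θ, hθ⟩ => ?_⟩
    · have half_mem : ∀ y ∈ Ioo 0 π, y / 2 ∈ Ioo 0 (π / 2) := fun y hy =>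
        ⟨half_pos hy.1, by linarith [hy.2]⟩
      obtain ⟨rfl, hxx'⟩ := clusterAngles_injOn hn (half_mem x hx.1) (half_mem x' hx'.1)
        (congrArg Subtype.val h)
      exact Sigma.subtype_ext rfl (by linarith)
    · obtain ⟨T, x, hx, hTx, rfl⟩ := exists_eq_clusterAngles hn hq hθ
      exact ⟨⟨T, x, hx, hTx⟩, rfl⟩
  rw [← Nat.card_coe_set_eq, ← Nat.card_congr (Equiv.ofBijective g hg), Nat.card_sigma]
  rfl

theorem ncard_kuramotoEquilibria_halfSplit (hn : n ≠ 0) (heven : Even n) (hq : 0 < q)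
    (hnq : ∀ j : ℕ, (j : ℝ) - n / 2 ≠ q) :
    (kuramotoEquilibria n (halfSplitFrequencies n q) (fun _ => (n : ℝ))).ncard =
      2 * ∑ j ∈ Finset.range (n + 1), (if q < (j : ℝ) - n / 2 then n.choose j else 0) := by
  have hM : ∀ j : ℕ, (2 * j - n : ℝ) ≠ 2 * q := fun j h => hnq j (by linarith)
  have hcount : ∀ T : Finset (Fin n),
      {x ∈ Ioo 0 π | (2 * T.card - n) * sin x = 2 * q}.ncard =
        if q < (T.card : ℝ) - n / 2 then 2 else 0 := fun T => by
    rw [ncard_setOf_mul_sin_eq (mul_pos two_pos hq) (hM _)]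
    exact if_congr ⟨fun h => by linarith, fun h => by linarith⟩ rfl rfl
  rw [ncard_kuramotoEquilibria_halfSplit_eq_sum_ncard hn heven hq fun T => hM T.card,
    Finset.sum_congr rfl fun T _ => hcount T, ← Finset.powerset_univ,
    Finset.sum_powerset_apply_card (fun j => if q < (j : ℝ) - n / 2 then 2 else 0),
    Finset.card_univ, Fintype.card_fin, Finset.mul_sum]
  refine Finset.sum_congr rfl fun j _ => ?_
  split_ifs <;> simp [mul_comm]

end HalfSplit

/-- Theorem 4.4: let `n ≥ 2` be even and let `q > 0` be a non-integer
real.  For `ω = (nq,…,nq,-nq,…,-nq)` and `k = (n,…,n)`, the number of equilibria in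
`Θ_{ω,k}` is exactly `2^n - ∑_{ℓ ∈ ℤ, -q < ℓ < q} C(n, n/2 + ℓ)` (the sum written
here over `j = n/2 + ℓ ∈ {0,…,n}` with `|j - n/2| < q`). -/
theorem card_equilibria_even_case (n : ℕ) (hn : 2 ≤ n) (heven : Even n)
    (q : ℝ) (hq : 0 < q) (hqint : ∀ m : ℤ, q ≠ (m : ℝ)) :
    (kuramotoEquilibria n
        (fun μ => if (μ : ℕ) < n / 2 then (n : ℝ) * q else -((n : ℝ) * q))
        (fun _ => (n : ℝ))).ncard =
      2 ^ n - ∑ j ∈ Finset.range (n + 1),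
        if |(j : ℝ) - (n : ℝ) / 2| < q then n.choose j else 0 := by
  obtain ⟨m, rfl⟩ := heven
  have hnq : ∀ j : ℕ, (j : ℝ) - ↑(m + m) / 2 ≠ q := fun j h =>
    hqint (j - m) (by rw [← h]; push_cast; ring)
  have hcount := ncard_kuramotoEquilibria_halfSplit (by omega) ⟨m, rfl⟩ hq hnq
  have hidentity := two_mul_sum_choose_gt_add_sum_choose_abs_lt (m + m) hq hnq
  unfold halfSplitFrequencies at hcount
  omega
end

section
/- Let n ≥ 3 be odd, let q_o = √(414 − 66√33)/16, and let 0 < q < q_o. Set ω_μ = nq for μ = 1,…,(n−1)/2, ω_μ = −nq for μ = (n−1)/2 + 1,…,n−1, ω_n = 0, and k = (n, n, …, n). Then the number of equilibria in Θ_{ω,k}, i.e., θ ∈ (−π,π]^n satisfying the equilibrium equations and OC1, is exactlyn 2^n − C(n−1, (n−1)/2), where C(a,b) denotes the binomial coefficient. -/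
/-!
With `k = (n, …, n)` and `ω = n w`, an equilibrium satisfying OC1 is exactly a `θ` with
`Σ sin θ_μ = 0`, `C := Σ cos θ_μ ≥ 0` and `w_ν = C sin θ_ν`. Hence `sin θ_ν = w_ν / C`, and `θ`
is determined by `C` together with the set `s` of indices where `cos θ_ν > 0`: off the last
index `|cos θ_ν| = √(1 - q²/C²)`, at it `|cos θ_ν| = 1`. Summing the cosines, `C > q` must solve
`C - e = J √(1 - q²/C²)`, where `e = ±1` is the sign at the last index and `J` is the excess of
positive over negative signs elsewhere, and conversely every such solution comes from exactly
one equilibrium with pattern `s`. Squared out, this is a quartic in `C` with a single critical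
point on `(0, ∞)`; it has one admissible root for `e = 1`, and for `e = -1` two roots if `J > 0`
(`q < q_o` makes the quartic negative at its dip when `J = 2`) and none otherwise. Summing over
the `2ⁿ` patterns gives `2ⁿ⁻¹ + 2 · #{J > 0} = 2ⁿ - C(n-1, (n-1)/2)`.
-/

open Real Finset

namespace Kuramoto

noncomputable section

theorem sum_mul_sin_sub {n : ℕ} (k θ : Fin n → ℝ) (x : ℝ) :
    ∑ μ, k μ * sin (x - θ μ) =
      sin x * ∑ μ, k μ * cos (θ μ) - cos x * ∑ μ, k μ * sin (θ μ) := by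
  simp only [sin_sub, mul_sum]
  rw [← sum_sub_distrib]
  exact sum_congr rfl fun _ _ => by ring

theorem mem_kuramotoEquilibria_iff {n : ℕ} {ω k θ : Fin n → ℝ} :
    θ ∈ kuramotoEquilibria n ω k ↔ (∀ ν, θ ν ∈ Set.Ioc (-π) π) ∧
      ∑ μ, k μ * sin (θ μ) = 0 ∧ 0 ≤ ∑ μ, k μ * cos (θ μ) ∧
      ∀ ν, ω ν = k ν * (∑ μ, k μ * cos (θ μ)) * sin (θ ν) / n := by
  have key : ∀ ν, (1 / (n : ℝ)) * ∑ μ, k ν * k μ * sin (θ ν - θ μ) =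
      k ν * ((∑ μ, k μ * cos (θ μ)) * sin (θ ν) - (∑ μ, k μ * sin (θ μ)) * cos (θ ν)) / n := by
    intro ν
    simp only [mul_assoc, ← mul_sum, sum_mul_sin_sub]
    ring
  simp only [kuramotoEquilibria, Set.mem_ofPred_eq, key]
  constructor
  · rintro ⟨hrange, heq, hsin, hcos⟩
    exact ⟨hrange, hsin, hcos, fun ν => by rw [heq ν, hsin]; ring⟩
  · rintro ⟨hrange, hsin, hcos, heq⟩
    exact ⟨hrange, fun ν => by rw [heq ν, hsin]; ring, hsin, hcos⟩

abbrev uniformEquilibria {n : ℕ} (w : Fin n → ℝ) : Set (Fin n → ℝ) :=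
  kuramotoEquilibria n (fun ν => n * w ν) (fun _ => n)

theorem mem_uniformEquilibria_iff {n : ℕ} (hn : n ≠ 0) {w θ : Fin n → ℝ} :
    θ ∈ uniformEquilibria w ↔
      (∀ ν, θ ν ∈ Set.Ioc (-π) π) ∧ ∑ μ, sin (θ μ) = 0 ∧
        0 ≤ ∑ μ, cos (θ μ) ∧ ∀ ν, w ν = (∑ μ, cos (θ μ)) * sin (θ ν) := by
  have hn' : (n : ℝ) ≠ 0 := Nat.cast_ne_zero.2 hn
  have hn0 : (0 : ℝ) < n := by positivity
  simp only [mem_kuramotoEquilibria_iff, ← mul_sum, mul_eq_zero, hn', false_or,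
    mul_nonneg_iff_of_pos_left hn0]
  refine and_congr_right' (and_congr_right' (and_congr_right' (forall_congr' fun ν => ?_)))
  constructor <;> intro h
  · field_simp at h; linarith
  · rw [h]; field_simp

theorem eq_of_cos_eq_of_sin_eq {x y : ℝ} (hx : x ∈ Set.Ioc (-π) π)
    (hy : y ∈ Set.Ioc (-π) π) (hc : cos x = cos y) (hs : sin x = sin y) : x = y := by
  rw [← Complex.arg_cos_add_sin_mul_I hx, ← Complex.arg_cos_add_sin_mul_I hy,
    ← Complex.ofReal_cos, ← Complex.ofReal_sin, hc, hs, Complex.ofReal_cos, Complex.ofReal_sin]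

theorem cos_arg_add_mul_I {c s : ℝ} (h : c ^ 2 + s ^ 2 = 1) :
    cos (Complex.arg (c + s * Complex.I)) = c ∧ sin (Complex.arg (c + s * Complex.I)) = s := by
  have hnorm : ‖(c : ℂ) + s * Complex.I‖ = 1 := by rw [Complex.norm_add_mul_I, h, sqrt_one]
  have hne : (c : ℂ) + s * Complex.I ≠ 0 := by
    intro h0; rw [h0, norm_zero] at hnorm; exact zero_ne_one hnorm
  rw [Complex.cos_arg hne, Complex.sin_arg, hnorm]
  simp

theorem eq_iff_sq_eq_and_mul_nonneg {a b : ℝ} : a = b ↔ a ^ 2 = b ^ 2 ∧ 0 ≤ a * b := by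
  constructor
  · rintro rfl
    exact ⟨rfl, mul_self_nonneg a⟩
  · rintro ⟨hsq, hab⟩
    rcases sq_eq_sq_iff_eq_or_eq_neg.1 hsq with h | rfl
    · exact h
    · have : b ^ 2 = 0 := by nlinarith
      simp [pow_eq_zero_iff two_ne_zero |>.1 this]

/-- The values `C > q` of `Σ_μ cos θ_μ` compatible with an equilibrium whose zero-frequency
oscillator has cosine sign `e = ±1` and whose other cosines have `J` more positive than negative
signs. -/
def orderParamSolutions (q J e : ℝ) : Set ℝ :=
  {C | q < C ∧ C - e = J * √(1 - q ^ 2 / C ^ 2)}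

/-- `C²` times the difference of the squares of the two sides of the equation defining
`orderParamSolutions`. -/
def quartic (q J e C : ℝ) : ℝ := C ^ 2 * (C - e) ^ 2 - J ^ 2 * (C ^ 2 - q ^ 2)

section SelfConsistency

variable {q J e C : ℝ}

theorem mem_orderParamSolutions_iff (hq : 0 < q) :
    C ∈ orderParamSolutions q J e ↔ q < C ∧ quartic q J e C = 0 ∧ 0 ≤ J * (C - e) := by
  refine and_congr_right fun hqC => ?_
  have hC : 0 < C := hq.trans hqC
  have ht : 0 < 1 - q ^ 2 / C ^ 2 := by
    rw [sub_pos, div_lt_one (by positivity)]; nlinarith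
  have hsq := sq_sqrt ht.le
  have hpos := sqrt_pos.2 ht
  rw [eq_iff_sq_eq_and_mul_nonneg]
  refine and_congr ?_ ?_
  · rw [mul_pow, hsq, quartic]
    constructor <;> intro h
    · field_simp at h; linarith
    · field_simp; linarith
  · rw [show (C - e) * (J * √(1 - q ^ 2 / C ^ 2)) = J * (C - e) * √(1 - q ^ 2 / C ^ 2) by ring]
    exact mul_nonneg_iff_of_pos_right hpos

theorem continuous_quartic : Continuous (quartic q J e) := by
  unfold quartic; fun_prop

/-- The larger root of `2C² - 3eC + e² - J²`; note `∂quartic/∂C = 2C (2C² - 3eC + e² - J²)`. -/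
def criticalPoint (J e : ℝ) : ℝ := (3 * e + √(8 * J ^ 2 + 1)) / 4

theorem hasDerivAt_quartic (he : e ^ 2 = 1) :
    HasDerivAt (quartic q J e)
      (4 * C * (C - criticalPoint J e) * (C - (3 * e - √(8 * J ^ 2 + 1)) / 4)) C := by
  have hS := sq_sqrt (by positivity : (0 : ℝ) ≤ 8 * J ^ 2 + 1)
  have hx := hasDerivAt_id' C
  have h := ((hx.pow 2).mul ((hx.sub_const e).pow 2)).sub
    (((hx.pow 2).sub_const (q ^ 2)).const_mul (J ^ 2))
  show HasDerivAt (fun x => x ^ 2 * (x - e) ^ 2 - J ^ 2 * (x ^ 2 - q ^ 2)) _ C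
  refine h.congr_deriv ?_
  simp only [Pi.pow_apply, criticalPoint]
  linear_combination (C / 4) * hS - (C / 4) * he

theorem three_le_sqrt (hJ : 1 ≤ J ^ 2) : 3 ≤ √(8 * J ^ 2 + 1) := by
  rw [show (3 : ℝ) = √(3 ^ 2) by rw [sqrt_sq (by norm_num)]]
  exact sqrt_le_sqrt (by nlinarith)

theorem strictAntiOn_quartic (hJ : 1 ≤ J ^ 2) (he : e ^ 2 = 1) :
    StrictAntiOn (quartic q J e) (Set.Icc 0 (criticalPoint J e)) := by
  have hS := three_le_sqrt hJ
  have he1 : e ≤ 1 := by nlinarith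
  refine strictAntiOn_of_deriv_neg (convex_Icc _ _) continuous_quartic.continuousOn fun C hC => ?_
  rw [interior_Icc] at hC
  rw [(hasDerivAt_quartic he).deriv]
  exact mul_neg_of_neg_of_pos (mul_neg_of_pos_of_neg (by linarith [hC.1]) (by linarith [hC.2]))
    (by linarith [hC.1])

theorem strictMonoOn_quartic (hJ : 1 ≤ J ^ 2) (he : e ^ 2 = 1) :
    StrictMonoOn (quartic q J e) (Set.Ici (criticalPoint J e)) := by
  have hS := three_le_sqrt hJ
  have he1 : -1 ≤ e := by nlinarith
  refine strictMonoOn_of_deriv_pos (convex_Ici _) continuous_quartic.continuousOn fun C hC => ?_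
  rw [interior_Ici, Set.mem_Ioi, criticalPoint] at hC
  rw [(hasDerivAt_quartic he).deriv, criticalPoint]
  exact mul_pos (mul_pos (by linarith) (by linarith)) (by linarith)

theorem encard_setOf_eq_le_two {f : ℝ → ℝ} {a c y : ℝ} (h₁ : StrictAntiOn f (Set.Icc a c))
    (h₂ : StrictMonoOn f (Set.Ici c)) : {x | a ≤ x ∧ f x = y}.encard ≤ 2 := by
  have hsub : {x | a ≤ x ∧ f x = y} ⊆
      {x | x ∈ Set.Icc a c ∧ f x = y} ∪ {x | x ∈ Set.Ici c ∧ f x = y} := by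
    rintro x ⟨hax, hx⟩
    rcases le_total x c with hxc | hcx
    · exact Or.inl ⟨⟨hax, hxc⟩, hx⟩
    · exact Or.inr ⟨hcx, hx⟩
  have hA : {x | x ∈ Set.Icc a c ∧ f x = y}.encard ≤ 1 :=
    Set.encard_le_one_iff.2 fun x x' hx hx' => h₁.injOn hx.1 hx'.1 (hx.2.trans hx'.2.symm)
  have hB : {x | x ∈ Set.Ici c ∧ f x = y}.encard ≤ 1 :=
    Set.encard_le_one_iff.2 fun x x' hx hx' => h₂.injOn hx.1 hx'.1 (hx.2.trans hx'.2.symm)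
  calc {x | a ≤ x ∧ f x = y}.encard ≤ _ := Set.encard_le_encard hsub
    _ ≤ _ := Set.encard_union_le _ _
    _ ≤ 1 + 1 := add_le_add hA hB
    _ = 2 := one_add_one_eq_two

theorem orderParamSolutions_zero_one (hq1 : q < 1) : orderParamSolutions q 0 1 = {1} := by
  ext C
  simp only [orderParamSolutions, Set.mem_ofPred_eq, Set.mem_singleton_iff, zero_mul, sub_eq_zero]
  exact ⟨And.right, fun h => ⟨h ▸ hq1, h⟩⟩

theorem orderParamSolutions_neg_one_of_nonpos (hq : 0 < q) (hJ : J ≤ 0) :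
    orderParamSolutions q J (-1) = ∅ := by
  refine Set.eq_empty_of_forall_notMem fun C ⟨hqC, hC⟩ => ?_
  have : J * √(1 - q ^ 2 / C ^ 2) ≤ 0 := mul_nonpos_of_nonpos_of_nonneg hJ (sqrt_nonneg _)
  linarith

theorem quartic_self : quartic q J e q = q ^ 2 * (q - e) ^ 2 := by
  simp [quartic]

theorem eq_singleton_of_injOn {A : Set ℝ} (hq : 0 < q) (hA : Set.InjOn (quartic q J e) A)
    (hsub : orderParamSolutions q J e ⊆ A) (hC : C ∈ orderParamSolutions q J e) :
    orderParamSolutions q J e = {C} := by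
  refine Set.eq_singleton_iff_unique_mem.2 ⟨hC, fun D hD => hA (hsub hD) (hsub hC) ?_⟩
  rw [((mem_orderParamSolutions_iff hq).1 hD).2.1, ((mem_orderParamSolutions_iff hq).1 hC).2.1]

theorem quartic_one_neg (hq0 : 0 < q) (hq1 : q < 1) (hJ : J ≠ 0) : quartic q J 1 1 < 0 := by
  have : 0 < J ^ 2 * (1 - q ^ 2) := mul_pos (by positivity) (by nlinarith)
  simp only [quartic]
  linarith

theorem exists_orderParamSolutions_one_eq_singleton_of_neg (hq0 : 0 < q) (hq1 : q < 1)
    (hJ : J ≤ -1) : ∃ C, orderParamSolutions q J 1 = {C} := by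
  have hJ2 : 1 ≤ J ^ 2 := by nlinarith
  have hS := three_le_sqrt hJ2
  have hsub : orderParamSolutions q J 1 ⊆ Set.Icc 0 (criticalPoint J 1) := by
    intro C hC
    obtain ⟨hqC, -, hsign⟩ := (mem_orderParamSolutions_iff hq0).1 hC
    unfold criticalPoint
    constructor <;> nlinarith
  have hq : 0 < quartic q J 1 q := by
    rw [quartic_self]
    nlinarith [mul_pos (mul_pos hq0 hq0) (mul_pos (sub_pos.2 hq1) (sub_pos.2 hq1))]
  obtain ⟨C, hC, hroot⟩ := intermediate_value_Ioo' hq1.le continuous_quartic.continuousOn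
    ⟨quartic_one_neg hq0 hq1 (by linarith), hq⟩
  refine ⟨C, eq_singleton_of_injOn hq0 (strictAntiOn_quartic hJ2 (one_pow 2)).injOn hsub
    ((mem_orderParamSolutions_iff hq0).2 ⟨hC.1, hroot, ?_⟩)⟩
  nlinarith [hC.2]

theorem exists_orderParamSolutions_one_eq_singleton_of_pos (hq0 : 0 < q) (hq1 : q < 1)
    (hJ : 1 ≤ J) : ∃ C, orderParamSolutions q J 1 = {C} := by
  have hJ2 : 1 ≤ J ^ 2 := by nlinarith
  have hc : 1 ≤ criticalPoint J 1 := by unfold criticalPoint; linarith [three_le_sqrt hJ2]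
  have h1 := quartic_one_neg hq0 hq1 (by linarith : J ≠ 0)
  have hsub : orderParamSolutions q J 1 ⊆ Set.Ici (criticalPoint J 1) := by
    intro C hC
    obtain ⟨hqC, hroot, hsign⟩ := (mem_orderParamSolutions_iff hq0).1 hC
    have h1C : 1 ≤ C := by nlinarith
    rw [Set.mem_Ici]
    by_contra! hCc
    have := (strictAntiOn_quartic (q := q) hJ2 (one_pow 2)).antitoneOn ⟨zero_le_one, hc⟩
      ⟨by linarith, hCc.le⟩ h1C
    linarith
  have hbig : 0 < quartic q J 1 (J + 2) := by
    simp only [quartic]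
    nlinarith [mul_pos (by positivity : (0 : ℝ) < (J + 2) ^ 2) (by linarith : 0 < 2 * J + 1),
      sq_nonneg (J * q)]
  obtain ⟨C, hC, hroot⟩ := intermediate_value_Ioo (by linarith) continuous_quartic.continuousOn
    ⟨h1, hbig⟩
  refine ⟨C, eq_singleton_of_injOn hq0 (strictMonoOn_quartic hJ2 (one_pow 2)).injOn hsub
    ((mem_orderParamSolutions_iff hq0).2 ⟨by linarith [hC.1], hroot, ?_⟩)⟩
  nlinarith [hC.1]

/-- `(√33 - 3)/4` minimises `C²(C+1)² - 4C²`, and `q < q_o` is exactly the condition making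
the quartic negative there. -/
theorem quartic_neg_one_neg_of_two_le (hq : q ^ 2 < (414 - 66 * √33) / 256) (hJ : 2 ≤ J) :
    q < (√33 - 3) / 4 ∧ quartic q J (-1) ((√33 - 3) / 4) < 0 := by
  have h33 : √33 ^ 2 = 33 := sq_sqrt (by norm_num)
  have h33l : 5.7 < √33 := by nlinarith [sqrt_nonneg 33]
  have h33u : √33 < 5.75 := by nlinarith [sqrt_nonneg 33]
  set C₀ := (√33 - 3) / 4 with hC₀
  have hqC₀ : q < C₀ := by nlinarith
  have hmin : C₀ ^ 2 * (C₀ + 1) ^ 2 - 4 * C₀ ^ 2 = -(414 - 66 * √33) / 64 := by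
    rw [hC₀]
    linear_combination ((√33 ^ 2 - 4 * √33 - 33) / 256) * h33
  have : 4 * (C₀ ^ 2 - q ^ 2) ≤ J ^ 2 * (C₀ ^ 2 - q ^ 2) :=
    mul_le_mul_of_nonneg_right (by nlinarith) (by nlinarith)
  refine ⟨hqC₀, ?_⟩
  simp only [quartic]
  linarith

theorem encard_orderParamSolutions_neg_one_of_two_le (hq0 : 0 < q)
    (hq : q ^ 2 < (414 - 66 * √33) / 256) (hJ : 2 ≤ J) :
    (orderParamSolutions q J (-1)).encard = 2 := by
  have hJ2 : 1 ≤ J ^ 2 := by nlinarith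
  obtain ⟨hq_dip, hneg⟩ := quartic_neg_one_neg_of_two_le hq hJ
  have hleft : 0 < quartic q J (-1) q := by
    rw [quartic_self]
    exact mul_pos (pow_pos hq0 2) (pow_pos (by linarith) 2)
  have hright : 0 < quartic q J (-1) (J + 1) := by
    simp only [quartic]
    nlinarith [mul_pos (by positivity : (0 : ℝ) < (J + 1) ^ 2) (by linarith : 0 < 2 * J + 1),
      sq_nonneg (J * q)]
  obtain ⟨a, ha, ha0⟩ := intermediate_value_Ioo' hq_dip.le continuous_quartic.continuousOn
    ⟨hneg, hleft⟩
  obtain ⟨b, hb, hb0⟩ := intermediate_value_Ioo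
    (by nlinarith [sq_sqrt (by norm_num : (0 : ℝ) ≤ 33), sqrt_nonneg 33])
    continuous_quartic.continuousOn ⟨hneg, hright⟩
  have hmem : ∀ x, q < x → quartic q J (-1) x = 0 → x ∈ orderParamSolutions q J (-1) :=
    fun x hx h0 => (mem_orderParamSolutions_iff hq0).2 ⟨hx, h0, by nlinarith⟩
  apply le_antisymm
  · calc _ ≤ {x | 0 ≤ x ∧ quartic q J (-1) x = 0}.encard :=
          Set.encard_le_encard fun x hx =>
            have hx := (mem_orderParamSolutions_iff hq0).1 hx
            ⟨by linarith [hx.1], hx.2.1⟩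
      _ ≤ 2 := encard_setOf_eq_le_two (strictAntiOn_quartic hJ2 (by norm_num))
          (strictMonoOn_quartic hJ2 (by norm_num))
  · rw [← Set.encard_pair (ha.2.trans hb.1).ne]
    exact Set.encard_le_encard (Set.insert_subset (hmem a ha.1 ha0)
      (Set.singleton_subset_iff.2 (hmem b (hq_dip.trans hb.1) hb0)))

theorem encard_orderParamSolutions_one (hq0 : 0 < q) (hq1 : q < 1) (j : ℤ) :
    (orderParamSolutions q (2 * j) 1).encard = 1 := by
  obtain ⟨C, hC⟩ : ∃ C, orderParamSolutions q (2 * j) 1 = {C} := by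
    rcases lt_trichotomy j 0 with hj | rfl | hj
    · have : (j : ℝ) ≤ -1 := by exact_mod_cast Int.le_sub_one_of_lt hj
      exact exists_orderParamSolutions_one_eq_singleton_of_neg hq0 hq1 (by linarith)
    · exact ⟨1, by simpa using orderParamSolutions_zero_one hq1⟩
    · have : (1 : ℝ) ≤ j := by exact_mod_cast hj
      exact exists_orderParamSolutions_one_eq_singleton_of_pos hq0 hq1 (by linarith)
  rw [hC, Set.encard_singleton]

theorem encard_orderParamSolutions_neg_one (hq0 : 0 < q)
    (hq : q ^ 2 < (414 - 66 * √33) / 256) (j : ℤ) :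
    (orderParamSolutions q (2 * j) (-1)).encard = if 0 < j then 2 else 0 := by
  split_ifs with hj
  · have : (1 : ℝ) ≤ j := by exact_mod_cast hj
    exact encard_orderParamSolutions_neg_one_of_two_le hq0 hq (by linarith)
  · have : (j : ℝ) ≤ 0 := by exact_mod_cast not_lt.1 hj
    rw [orderParamSolutions_neg_one_of_nonpos hq0 (by linarith), Set.encard_empty]

end SelfConsistency

section Fibers

variable {n : ℕ} {w θ : Fin n → ℝ} {q : ℝ} {o : Fin n}

def signPattern (θ : Fin n → ℝ) : Finset (Fin n) := {ν | 0 < cos (θ ν)}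

def patternSign (s : Finset (Fin n)) (ν : Fin n) : ℝ := if ν ∈ s then 1 else -1

theorem patternSign_sq (s : Finset (Fin n)) (ν : Fin n) : patternSign s ν ^ 2 = 1 := by
  unfold patternSign; split_ifs <;> norm_num

theorem sin_eq_div_and_cos_eq (hθ : θ ∈ uniformEquilibria w)
    {ν : Fin n} (hν : |w ν| < ∑ μ, cos (θ μ)) :
    sin (θ ν) = w ν / ∑ μ, cos (θ μ) ∧
      cos (θ ν) =
        patternSign (signPattern θ) ν * √(1 - (w ν / ∑ μ, cos (θ μ)) ^ 2) := by
  set C := ∑ μ, cos (θ μ)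
  have hC : 0 < C := (abs_nonneg _).trans_lt hν
  obtain ⟨-, -, -, heq⟩ := (mem_uniformEquilibria_iff ν.pos.ne').1 hθ
  have hsin : sin (θ ν) = w ν / C := by rw [heq ν, mul_div_cancel_left₀ _ hC.ne']
  refine ⟨hsin, ?_⟩
  have hcos : √(1 - (w ν / C) ^ 2) = |cos (θ ν)| := by
    rw [← hsin, ← cos_sq', sqrt_sq_eq_abs]
  have hsin1 : |sin (θ ν)| < 1 := by
    rw [hsin, abs_div, abs_of_pos hC, div_lt_one hC]; exact hν
  have hcos0 : cos (θ ν) ≠ 0 := by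
    intro h0
    have := sin_sq_add_cos_sq (θ ν)
    rw [h0] at this
    nlinarith [abs_lt.1 hsin1]
  rw [hcos, patternSign, signPattern]
  rcases hcos0.lt_or_gt with h | h
  · simp [not_lt.2 h.le, abs_of_neg h]
  · simp [h, abs_of_pos h]

theorem sum_patternSign_mul_sqrt (hwo : w o = 0) (hw : ∀ ν ≠ o, |w ν| = q)
    (s : Finset (Fin n)) (C : ℝ) :
    ∑ ν, patternSign s ν * √(1 - (w ν / C) ^ 2) =
      (∑ ν ∈ univ.erase o, patternSign s ν) * √(1 - q ^ 2 / C ^ 2) + patternSign s o := by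
  rw [← add_sum_erase _ _ (mem_univ o), hwo, sum_mul, add_comm]
  congr 1
  · refine sum_congr rfl fun ν hν => ?_
    rw [div_pow, ← sq_abs, hw ν (ne_of_mem_erase hν)]
  · simp

theorem lt_sum_cos (hq0 : 0 < q) (hq1 : q < 1) {ν₀ : Fin n} (hν₀ : ν₀ ≠ o)
    (hwo : w o = 0) (hw : ∀ ν ≠ o, |w ν| = q) (hθ : θ ∈ uniformEquilibria w) :
    q < ∑ μ, cos (θ μ) := by
  obtain ⟨-, -, hC0, heq⟩ := (mem_uniformEquilibria_iff o.pos.ne').1 hθ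
  set C := ∑ μ, cos (θ μ)
  have habs : ∀ ν, |w ν| = C * |sin (θ ν)| := fun ν => by
    rw [heq ν, abs_mul, abs_of_nonneg hC0]
  have hqC : q ≤ C := by
    have := habs ν₀
    rw [hw ν₀ hν₀] at this
    nlinarith [abs_sin_le_one (θ ν₀), abs_nonneg (sin (θ ν₀))]
  refine hqC.lt_of_ne fun hCq => ?_
  -- If `C = q`, every cosine but the one at `o` vanishes, so `C = cos (θ o) = ±1`.
  have hcos : ∀ ν ≠ o, cos (θ ν) = 0 := fun ν hν => by
    have h1 : |sin (θ ν)| = 1 := by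
      have := habs ν
      rw [hw ν hν, ← hCq] at this
      nlinarith
    have := sin_sq_add_cos_sq (θ ν)
    rw [← sq_abs, h1] at this
    exact pow_eq_zero_iff two_ne_zero |>.1 (by linarith)
  have hsin : sin (θ o) = 0 := by
    have := heq o
    rw [hwo, ← hCq] at this
    exact (mul_eq_zero.1 this.symm).resolve_left hq0.ne'
  have hCo : C = cos (θ o) := sum_eq_single o (fun ν _ hν => hcos ν hν) (by simp)
  nlinarith [sin_sq_add_cos_sq (θ o)]

theorem sin_cos_eq_of_mem (hq0 : 0 < q) (hq1 : q < 1) {ν₀ : Fin n} (hν₀ : ν₀ ≠ o)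
    (hwo : w o = 0) (hw : ∀ ν ≠ o, |w ν| = q)
    (hθ : θ ∈ uniformEquilibria w) (ν : Fin n) :
    sin (θ ν) = w ν / ∑ μ, cos (θ μ) ∧
      cos (θ ν) =
        patternSign (signPattern θ) ν * √(1 - (w ν / ∑ μ, cos (θ μ)) ^ 2) := by
  refine sin_eq_div_and_cos_eq hθ (lt_of_le_of_lt ?_ (lt_sum_cos hq0 hq1 hν₀ hwo hw hθ))
  rcases eq_or_ne ν o with rfl | hν
  · rw [hwo, abs_zero]; exact hq0.le
  · exact (hw ν hν).le

theorem mapsTo_sum_cos (hq0 : 0 < q) (hq1 : q < 1) {ν₀ : Fin n} (hν₀ : ν₀ ≠ o)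
    (hwo : w o = 0) (hw : ∀ ν ≠ o, |w ν| = q) (s : Finset (Fin n)) :
    Set.MapsTo (fun θ => ∑ μ, cos (θ μ))
      {θ | θ ∈ uniformEquilibria w ∧ signPattern θ = s}
      (orderParamSolutions q (∑ ν ∈ univ.erase o, patternSign s ν) (patternSign s o)) := by
  rintro θ ⟨hθ, rfl⟩
  refine ⟨lt_sum_cos hq0 hq1 hν₀ hwo hw hθ, ?_⟩
  have := sum_patternSign_mul_sqrt hwo hw (signPattern θ) (∑ μ, cos (θ μ))
  rw [← sum_congr rfl fun ν _ => (sin_cos_eq_of_mem hq0 hq1 hν₀ hwo hw hθ ν).2] at this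
  linarith

theorem injOn_sum_cos (hq0 : 0 < q) (hq1 : q < 1) {ν₀ : Fin n} (hν₀ : ν₀ ≠ o)
    (hwo : w o = 0) (hw : ∀ ν ≠ o, |w ν| = q) (s : Finset (Fin n)) :
    Set.InjOn (fun θ => ∑ μ, cos (θ μ))
      {θ | θ ∈ uniformEquilibria w ∧ signPattern θ = s} := by
  rintro θ ⟨hθ, hs⟩ θ' ⟨hθ', hs'⟩ (hC : ∑ μ, cos (θ μ) = ∑ μ, cos (θ' μ))
  funext ν
  have hn := o.pos.ne'
  obtain ⟨hsin, hcos⟩ := sin_cos_eq_of_mem hq0 hq1 hν₀ hwo hw hθ ν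
  obtain ⟨hsin', hcos'⟩ := sin_cos_eq_of_mem hq0 hq1 hν₀ hwo hw hθ' ν
  refine eq_of_cos_eq_of_sin_eq (((mem_uniformEquilibria_iff hn).1 hθ).1 ν)
    (((mem_uniformEquilibria_iff hn).1 hθ').1 ν) ?_ ?_
  · rw [hcos, hcos', hs, hs', hC]
  · rw [hsin, hsin', hC]

theorem surjOn_sum_cos (hq0 : 0 < q) (hwo : w o = 0) (hw : ∀ ν ≠ o, |w ν| = q)
    (hsum : ∑ ν, w ν = 0) (s : Finset (Fin n)) :
    Set.SurjOn (fun θ => ∑ μ, cos (θ μ))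
      {θ | θ ∈ uniformEquilibria w ∧ signPattern θ = s}
      (orderParamSolutions q (∑ ν ∈ univ.erase o, patternSign s ν) (patternSign s o)) := by
  rintro C ⟨hqC, hCeq⟩
  have hC : 0 < C := hq0.trans hqC
  have hwC : ∀ ν, (w ν / C) ^ 2 < 1 := fun ν => by
    rw [sq_lt_one_iff_abs_lt_one, abs_div, abs_of_pos hC, div_lt_one hC]
    rcases eq_or_ne ν o with rfl | hν
    · rwa [hwo, abs_zero]
    · rwa [hw ν hν]
  set θ : Fin n → ℝ := fun ν =>
    Complex.arg ((patternSign s ν * √(1 - (w ν / C) ^ 2) : ℝ) + (w ν / C : ℝ) * Complex.I)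
  have hθ : ∀ ν, cos (θ ν) = patternSign s ν * √(1 - (w ν / C) ^ 2) ∧
      sin (θ ν) = w ν / C := fun ν => by
    refine cos_arg_add_mul_I ?_
    rw [mul_pow, patternSign_sq, one_mul, sq_sqrt (by linarith [hwC ν])]
    ring
  have hsumcos : ∑ μ, cos (θ μ) = C := by
    simp only [hθ]
    rw [sum_patternSign_mul_sqrt hwo hw]
    linarith
  refine ⟨θ, ⟨(mem_uniformEquilibria_iff o.pos.ne').2 ⟨fun ν => Complex.arg_mem_Ioc _,
    ?_, hsumcos ▸ hC.le, fun ν => ?_⟩, ?_⟩, hsumcos⟩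
  · simp only [hθ, ← sum_div, hsum, zero_div]
  · rw [hsumcos, (hθ ν).2, mul_div_cancel₀ _ hC.ne']
  · ext ν
    have := sqrt_pos.2 (sub_pos.2 (hwC ν))
    simp only [signPattern, mem_filter, mem_univ, true_and, (hθ ν).1, patternSign]
    by_cases h : ν ∈ s
    · rw [if_pos h, one_mul]
      exact iff_of_true this h
    · rw [if_neg h]
      exact iff_of_false (not_lt.2 (by linarith)) h

theorem encard_uniformEquilibria_eq_sum (hq0 : 0 < q) (hq1 : q < 1) {ν₀ : Fin n}
    (hν₀ : ν₀ ≠ o) (hwo : w o = 0) (hw : ∀ ν ≠ o, |w ν| = q) (hsum : ∑ ν, w ν = 0) :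
    (uniformEquilibria w).encard = ∑ s : Finset (Fin n),
      (orderParamSolutions q (∑ ν ∈ univ.erase o, patternSign s ν) (patternSign s o)).encard := by
  have hunion : uniformEquilibria w = ⋃ s : Finset (Fin n),
      {θ | θ ∈ uniformEquilibria w ∧ signPattern θ = s} := by
    ext θ
    simp
  rw [hunion, Set.encard_iUnion_of_finite, finsum_eq_sum_of_fintype]
  · refine sum_congr rfl fun s _ => ?_
    have h : Set.BijOn _ _ _ := ⟨mapsTo_sum_cos hq0 hq1 hν₀ hwo hw s,
      injOn_sum_cos hq0 hq1 hν₀ hwo hw s, surjOn_sum_cos hq0 hwo hw hsum s⟩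
    rw [← h.image_eq, h.injOn.encard_image]
  · exact fun s t hst => Set.disjoint_left.2 fun θ hs ht => hst (hs.2.symm.trans ht.2)

theorem sum_patternSign (u s : Finset (Fin n)) :
    ∑ ν ∈ u, patternSign s ν = 2 * #{ν ∈ u | ν ∈ s} - #u := by
  have h := card_filter_add_card_filter_not (s := u) (· ∈ s)
  simp only [patternSign, sum_ite, sum_const, nsmul_eq_mul, mul_one, mul_neg]
  rw [← h]
  push_cast
  ring

end Fibers

theorem two_mul_card_filter_lt_card_add_choose {α : Type*} [DecidableEq α] {u : Finset α}
    {m : ℕ} (hu : #u = 2 * m) :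
    2 * #{t ∈ u.powerset | m < #t} + (2 * m).choose m = 2 ^ (2 * m) := by
  have hcard_sdiff : ∀ t ∈ u.powerset, #(u \ t) = 2 * m - #t := fun t ht => by
    rw [card_sdiff_of_subset (mem_powerset.1 ht), hu]
  have hle : ∀ t ∈ u.powerset, #t ≤ 2 * m := fun t ht =>
    hu ▸ card_le_card (mem_powerset.1 ht)
  have hcompl : #{t ∈ u.powerset | m < #t} = #{t ∈ u.powerset | #t < m} := by
    refine card_nbij' (u \ ·) (u \ ·) ?_ ?_ ?_ ?_
    all_goals intro t ht
    all_goals simp only [coe_filter, Set.mem_ofPred_eq, mem_powerset] at ht ⊢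
    · have := hcard_sdiff t (mem_powerset.2 ht.1)
      have := hle t (mem_powerset.2 ht.1)
      exact ⟨sdiff_subset, by omega⟩
    · have := hcard_sdiff t (mem_powerset.2 ht.1)
      have := hle t (mem_powerset.2 ht.1)
      exact ⟨sdiff_subset, by omega⟩
    · exact Finset.sdiff_sdiff_eq_self ht.1
    · exact Finset.sdiff_sdiff_eq_self ht.1
  have hmid : #{t ∈ u.powerset | #t = m} = (2 * m).choose m := by
    rw [← powersetCard_eq_filter, card_powersetCard, hu]
  have hsplit := card_filter_add_card_filter_not (s := u.powerset) (fun t => m < #t)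
  have hsplit' := card_filter_add_card_filter_not (s := {t ∈ u.powerset | ¬ m < #t})
    (fun t => #t = m)
  rw [filter_filter, filter_filter] at hsplit'
  rw [card_powerset, hu] at hsplit
  have e1 : {t ∈ u.powerset | ¬ m < #t ∧ #t = m} = {t ∈ u.powerset | #t = m} :=
    filter_congr fun t _ => by omega
  have e2 : {t ∈ u.powerset | ¬ m < #t ∧ ¬ #t = m} = {t ∈ u.powerset | #t < m} :=
    filter_congr fun t _ => by omega
  rw [e1, e2] at hsplit'
  omega

theorem sum_ite_mem_ite_lt_card {α : Type*} [Fintype α] [DecidableEq α] (a : α) {m : ℕ}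
    (hα : Fintype.card α = 2 * m + 1) :
    ∑ s : Finset α, (if a ∈ s then 1 else if m < #(s.erase a) then 2 else 0) =
      2 ^ (2 * m + 1) - (2 * m).choose m := by
  have hu : #(univ.erase a) = 2 * m := by rw [card_erase_of_mem (mem_univ a), card_univ, hα]; rfl
  rw [← powerset_univ, ← insert_erase (mem_univ a), sum_powerset_insert (notMem_erase a univ)]
  have h1 : ∑ t ∈ (univ.erase a).powerset,
      (if a ∈ t then 1 else if m < #(t.erase a) then 2 else 0) =
      2 * #{t ∈ (univ.erase a).powerset | m < #t} := by
    rw [card_filter, mul_sum]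
    refine sum_congr rfl fun t ht => ?_
    have hat : a ∉ t := fun h => notMem_erase a univ (mem_powerset.1 ht h)
    rw [if_neg hat, erase_eq_of_notMem hat]
    split_ifs <;> rfl
  have h2 : ∑ t ∈ (univ.erase a).powerset,
      (if a ∈ insert a t then 1 else if m < #((insert a t).erase a) then 2 else 0) =
        2 ^ (2 * m) := by
    simp [hu]
  rw [h1, h2, pow_succ]
  have := two_mul_card_filter_lt_card_add_choose hu
  omega

def oddProfile (m : ℕ) (q : ℝ) (ν : Fin (2 * m + 1)) : ℝ :=
  if (ν : ℕ) < m then q else if (ν : ℕ) < 2 * m then -q else 0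

theorem oddProfile_last (m : ℕ) (q : ℝ) : oddProfile m q (Fin.last (2 * m)) = 0 := by
  rw [oddProfile, if_neg (by simp; omega), if_neg (by simp)]

theorem abs_oddProfile {m : ℕ} {q : ℝ} (hq : 0 ≤ q) {ν : Fin (2 * m + 1)}
    (hν : ν ≠ Fin.last (2 * m)) : |oddProfile m q ν| = q := by
  have : (ν : ℕ) < 2 * m := lt_of_le_of_ne (Nat.lt_succ_iff.1 ν.isLt) (Fin.val_ne_iff.2 hν)
  unfold oddProfile
  split_ifs <;> simp [abs_of_nonneg hq]

theorem sum_oddProfile (m : ℕ) (q : ℝ) : ∑ ν, oddProfile m q ν = 0 := by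
  unfold oddProfile
  rw [Fin.sum_univ_eq_sum_range (fun i => if i < m then q else if i < 2 * m then -q else 0),
    sum_range_succ, two_mul, sum_range_add]
  simp only [add_lt_iff_neg_left, not_lt_zero, if_false, add_lt_add_iff_left, lt_irrefl,
    add_zero]
  rw [sum_ite_of_true fun i hi => mem_range.1 hi, sum_ite_of_true fun i hi => mem_range.1 hi]
  simp

theorem encard_orderParamSolutions_patternSign {q : ℝ} (hq0 : 0 < q)
    (hq : q ^ 2 < (414 - 66 * √33) / 256) {m : ℕ} (o : Fin (2 * m + 1))
    (s : Finset (Fin (2 * m + 1))) :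
    (orderParamSolutions q (∑ ν ∈ univ.erase o, patternSign s ν) (patternSign s o)).encard =
      ((if o ∈ s then 1 else if m < #(s.erase o) then 2 else 0 : ℕ) : ℕ∞) := by
  have hJ : ∑ ν ∈ univ.erase o, patternSign s ν = 2 * ((#(s.erase o) : ℤ) - m : ℤ) := by
    have hfilter : {ν ∈ univ.erase o | ν ∈ s} = s.erase o := by ext; simp [and_comm]
    rw [sum_patternSign, hfilter, card_erase_of_mem (mem_univ o), card_univ, Fintype.card_fin]
    push_cast
    ring
  have hq1 : q < 1 := by nlinarith [sqrt_nonneg 33, sq_sqrt (by norm_num : (0 : ℝ) ≤ 33)]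
  rw [hJ, patternSign]
  by_cases ho : o ∈ s
  · simp only [ho, if_true, encard_orderParamSolutions_one hq0 hq1, Nat.cast_one]
  · simp only [ho, if_false, encard_orderParamSolutions_neg_one hq0 hq, sub_pos, Nat.cast_lt]
    split_ifs <;> rfl

theorem ncard_uniformEquilibria_oddProfile {m : ℕ} (hm : 1 ≤ m) {q : ℝ} (hq0 : 0 < q)
    (hq : q ^ 2 < (414 - 66 * √33) / 256) :
    (uniformEquilibria (oddProfile m q)).ncard = 2 ^ (2 * m + 1) - (2 * m).choose m := by
  have hq1 : q < 1 := by nlinarith [sqrt_nonneg 33, sq_sqrt (by norm_num : (0 : ℝ) ≤ 33)]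
  have h0 : (0 : Fin (2 * m + 1)) ≠ Fin.last (2 * m) := by
    rw [Ne, Fin.ext_iff]; simp; omega
  rw [Set.ncard_def, encard_uniformEquilibria_eq_sum hq0 hq1 h0 (oddProfile_last m q)
    (fun ν hν => abs_oddProfile hq0.le hν) (sum_oddProfile m q)]
  simp only [encard_orderParamSolutions_patternSign hq0 hq]
  rw [← Nat.cast_sum, sum_ite_mem_ite_lt_card _ (Fintype.card_fin _), ENat.toNat_natCast]

end

end Kuramoto

/-- Theorem 4.7: let `n ≥ 3` be odd, `q_o = √(414 - 66√33)/16`, and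
`0 < q < q_o`.  For `ω = (nq,…,nq,-nq,…,-nq,0)` (with `(n-1)/2` entries `nq` and
`(n-1)/2` entries `-nq`) and `k = (n,…,n)`, the number of equilibria in `Θ_{ω,k}`
is exactly `2^n - C(n-1, (n-1)/2)`. -/
theorem card_equilibria_odd_case (n : ℕ) (hn : 3 ≤ n) (hodd : Odd n)
    (q : ℝ) (hq0 : 0 < q) (hqo : q < Real.sqrt (414 - 66 * Real.sqrt 33) / 16) :
    (kuramotoEquilibria n
        (fun μ => if (μ : ℕ) < (n - 1) / 2 then (n : ℝ) * q
          else if (μ : ℕ) < n - 1 then -((n : ℝ) * q) else 0)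
        (fun _ => (n : ℝ))).ncard =
      2 ^ n - (n - 1).choose ((n - 1) / 2) := by
  obtain ⟨m, rfl⟩ := hodd
  have hq : q ^ 2 < (414 - 66 * √33) / 256 := by
    have := (lt_sqrt (by positivity)).1 ((lt_div_iff₀ (by norm_num)).1 hqo)
    linarith
  rw [Nat.add_sub_cancel, Nat.mul_div_cancel_left m two_pos,
    ← Kuramoto.ncard_uniformEquilibria_oddProfile (by omega) hq0 hq]
  congr 2
  funext μ
  unfold Kuramoto.oddProfile
  split_ifs <;> ring
end
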